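/- arXiv:1604.06117 — 6 statements merged into one kernel-verified Lean document; each statement's English description precedes it below -/
import Mathlib

section
/- Let C be a binary orthogonal array of parameters (n, M, τ) with 1 ≤ τ ≤ n − 1 and n ≥ 2, and let w = (w_0, …, w_n) be its distance distribution with respect to the zero vector. Then there exist a tuple w′ ∈ W(n−1, M, τ) and nonnegative integers x_0 = 0, x_1, …, x_n and y_0, y_1, …, y_{n−1}, y_n = 0 such that x_i + y_i = w_i for i = 1, …, n−1, x_{i+1} + y_i = w′_i for i = 0, …, n−1, y_0 = w_0, and x_n = w_n. -/
/-- A binary orthogonal array of parameters (n, M, τ): an M × n matrix over ZMod 2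
such that for every set of τ distinct columns and every tuple of values,
exactly M / 2^τ rows agree with those values on those columns. -/
def IsBOA (n M τ : ℕ) (C : Fin M → (Fin n → ZMod 2)) : Prop :=
  ∀ S : Finset (Fin n), S.card = τ →
    ∀ v : Fin n → ZMod 2,
      (Finset.univ.filter (fun r => ∀ j ∈ S, C r j = v j)).card = M / 2 ^ τ

/-- The i-th entry of the distance distribution of the array `C` with respect to
the point `c`: the number of rows of `C` at Hamming distance `i` from `c`. -/
def distDist {ι : Type} [Fintype ι] {n : ℕ} (C : ι → (Fin n → ZMod 2))
    (c : Fin n → ZMod 2) (i : ℕ) : ℕ :=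
  (Finset.univ.filter (fun r => hammingDist (C r) c = i)).card


/-- `W n M τ` is the set of (n+1)-tuples arising as the distance distribution of some
(n, M, τ) binary orthogonal array with respect to some point of the Hamming space. -/
def W (n M τ : ℕ) : Set (Fin (n + 1) → ℕ) :=
  {w | ∃ (C : Fin M → (Fin n → ZMod 2)) (c : Fin n → ZMod 2),
        IsBOA n M τ C ∧ ∀ i : Fin (n + 1), w i = distDist C c (i : ℕ)}

/-!
Split the rows of `C` according to their last coordinate: `x i` counts the rows of weight `i`
ending in `1`, `y i` those ending in `0`. Deleting the last column keeps the orthogonal array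
property (every `τ` columns of the shortened array are `τ` columns of `C`) and lowers the weight
of exactly the rows counted by `x` by one, so the shortened array has distance distribution
`x (i + 1) + y i` with respect to `0`.
-/

open Finset

theorem hammingNorm_eq_hammingNorm_init_add {β : Type*} [Zero β] [DecidableEq β] {n : ℕ}
    (v : Fin (n + 1) → β) :
    hammingNorm v = hammingNorm (Fin.init v) + if v (Fin.last n) ≠ 0 then 1 else 0 := by
  rw [hammingNorm, hammingNorm, card_filter, card_filter, Fin.sum_univ_castSucc]
  rfl

theorem IsBOA.comp_embedding {n m M τ : ℕ} {C : Fin M → Fin n → ZMod 2} (hC : IsBOA n M τ C)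
    (f : Fin m ↪ Fin n) : IsBOA m M τ (fun r => C r ∘ f) := by
  intro S hS v
  rw [← hC (S.map f) (by rwa [card_map]) (Function.extend f v 0)]
  congr 1
  refine filter_congr fun r _ => ?_
  simp [f.injective.extend_apply]

section LastColumn

variable {ι : Type} [Fintype ι] {n : ℕ} (C : ι → Fin (n + 1) → ZMod 2)

def distDistLastOne (i : ℕ) : ℕ :=
  #{r | hammingDist (C r) 0 = i ∧ C r (Fin.last n) ≠ 0}

def distDistLastZero (i : ℕ) : ℕ :=
  #{r | hammingDist (C r) 0 = i ∧ C r (Fin.last n) = 0}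

theorem distDistLastOne_add_distDistLastZero (i : ℕ) :
    distDistLastOne C i + distDistLastZero C i = distDist C 0 i := by
  rw [distDist, ← card_filter_add_card_filter_not (p := fun r => C r (Fin.last n) ≠ 0),
    filter_filter, filter_filter, distDistLastOne, distDistLastZero]
  simp only [not_not]

theorem distDistLastOne_succ_add_distDistLastZero (i : ℕ) :
    distDistLastOne C (i + 1) + distDistLastZero C i = distDist (fun r => Fin.init (C r)) 0 i := by
  rw [distDist, ← card_filter_add_card_filter_not (p := fun r => C r (Fin.last n) ≠ 0),
    filter_filter, filter_filter, distDistLastOne, distDistLastZero]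
  congr 2 <;> refine filter_congr fun r _ => ?_ <;> by_cases h : C r (Fin.last n) = 0 <;>
    simp [h, hammingNorm_eq_hammingNorm_init_add (C r)]

theorem distDistLastOne_zero : distDistLastOne C 0 = 0 := by
  refine card_eq_zero.2 (filter_eq_empty_iff.2 fun r _ ⟨h0, hlast⟩ => hlast ?_)
  simpa using congr_fun (hammingDist_eq_zero.1 h0) (Fin.last n)

theorem distDistLastZero_succ : distDistLastZero C (n + 1) = 0 := by
  refine card_eq_zero.2 (filter_eq_empty_iff.2 fun r _ ⟨hn, hlast⟩ => ?_)
  have hinit := hammingNorm_le_card_fintype (x := Fin.init (C r))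
  rw [hammingDist_zero_right, hammingNorm_eq_hammingNorm_init_add, hlast] at hn
  simp only [ne_eq, not_true_eq_false, if_false, add_zero, Fintype.card_fin] at hn hinit
  omega

end LastColumn

theorem stmt_6 (n M τ : ℕ)
    (C : Fin M → (Fin (n + 1) → ZMod 2)) (hC : IsBOA (n + 1) M τ C)
    (w : ℕ → ℕ) (hw : ∀ i, w i = distDist C 0 i) :
    ∃ w' ∈ W n M τ, ∃ x y : ℕ → ℕ,
      x 0 = 0 ∧ y (n + 1) = 0 ∧
      (∀ i, 1 ≤ i → i ≤ n → x i + y i = w i) ∧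
      (∀ i (hi : i ≤ n), x (i + 1) + y i = w' ⟨i, by omega⟩) ∧
      y 0 = w 0 ∧ x (n + 1) = w (n + 1) := by
  have hsplit (i : ℕ) := (distDistLastOne_add_distDistLastZero C i).trans (hw i).symm
  have hx0 := distDistLastOne_zero C
  have hyn := distDistLastZero_succ C
  refine ⟨fun i => distDist (fun r => Fin.init (C r)) 0 i,
    ⟨_, 0, hC.comp_embedding Fin.castSuccEmb, fun i => rfl⟩,
    distDistLastOne C, distDistLastZero C, hx0, hyn, fun i _ _ => hsplit i,
    fun i _ => distDistLastOne_succ_add_distDistLastZero C i, ?_, ?_⟩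
  · simpa [hx0] using hsplit 0
  · simpa [hyn] using hsplit (n + 1)
end

section
/- With the setup below, let C^{1,0} be the array obtained from C by complementing (adding 1 in ZMod 2 to) every entry of the first column of C. Then C^{1,0} is a binary orthogonal array of parameters (n, M, τ), and its distance distribution ŵ = (ŵ_0, …, ŵ_n) with respect to the zero vector satisfies ŵ_0 = x_1, ŵ_i = x_{i+1} + y_{i−1} for 1 ≤ i ≤ n−1, and ŵ_n = y_{n−1}. -/
open Finset

lemma zmod2_cases : ∀ a : ZMod 2, a = 0 ∨ a = 1 := by decide

lemma key_aux {n : ℕ} (f g : Fin (n+1) → ZMod 2)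
    (hg : ∀ j, g j = if j = 0 then f j + 1 else f j) :
    (f 0 = 1 ∧ hammingDist g 0 + 1 = hammingDist f 0) ∨
    (f 0 = 0 ∧ hammingDist g 0 = hammingDist f 0 + 1) := by
  have hd : ∀ h : Fin (n+1) → ZMod 2, hammingDist h 0 =
      (if h 0 ≠ 0 then 1 else 0) + ∑ j : Fin n, (if h j.succ ≠ 0 then 1 else 0) := by
    intro h
    rw [hammingDist, Finset.card_filter, Fin.sum_univ_succ]
    rfl
  have htail : ∀ j : Fin n, g j.succ = f j.succ := by
    intro j; rw [hg]; simp [Fin.succ_ne_zero]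
  have hT : (∑ j : Fin n, (if g j.succ ≠ 0 then 1 else 0)) =
      ∑ j : Fin n, (if f j.succ ≠ 0 then 1 else 0) := by
    apply Finset.sum_congr rfl; intro j _; rw [htail]
  have hg0 : g 0 = f 0 + 1 := by rw [hg]; simp
  rcases zmod2_cases (f 0) with h0 | h0
  · right
    refine ⟨h0, ?_⟩
    rw [hd g, hd f, hT, hg0, h0]
    simp [add_comm]
  · left
    refine ⟨h0, ?_⟩
    have h2 : (1 : ZMod 2) + 1 = 0 := by decide
    rw [hd g, hd f, hT, hg0, h0, h2]
    simp [add_comm]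

lemma zmod2_add11 : ∀ a : ZMod 2, a + 1 + 1 = a := by decide

lemma zmod2_ne_one : ∀ a : ZMod 2, a ≠ 1 ↔ a = 0 := by decide



theorem stmt_9 (n M τ : ℕ) (hn : 1 ≤ n)
    (C : Fin M → (Fin (n + 1) → ZMod 2)) (hC : IsBOA (n + 1) M τ C)
    (x y : ℕ → ℕ)
    (hx : ∀ i, x i = (Finset.univ.filter
      (fun r => hammingDist (C r) 0 = i ∧ C r 0 = 1)).card)
    (hy : ∀ i, y i = (Finset.univ.filter
      (fun r => hammingDist (C r) 0 = i ∧ C r 0 = 0)).card)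
    (C10 : Fin M → (Fin (n + 1) → ZMod 2))
    (hC10 : ∀ r j, C10 r j = if j = 0 then C r j + 1 else C r j) :
    IsBOA (n + 1) M τ C10 ∧
    distDist C10 0 0 = x 1 ∧
    (∀ i, 1 ≤ i → i ≤ n → distDist C10 0 i = x (i + 1) + y (i - 1)) ∧
    distDist C10 0 (n + 1) = y n := by
  have key := fun r => key_aux (C r) (C10 r) (hC10 r)
  have hle : ∀ r, hammingDist (C r) 0 ≤ n + 1 := by
    intro r
    refine le_trans hammingDist_le_card_fintype ?_
    simp
  refine ⟨?_, ?_, ?_, ?_⟩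
  · intro S hS v
    rw [← hC S hS (fun j => if j = 0 then v j + 1 else v j)]
    congr 1
    refine Finset.filter_congr fun r _ => ?_
    constructor
    · intro h j hj
      have hj' := h j hj
      rw [hC10] at hj'
      by_cases hj0 : j = 0
      · simp only [if_pos hj0] at hj' ⊢
        rw [← hj', zmod2_add11]
      · simp only [if_neg hj0] at hj' ⊢
        exact hj'
    · intro h j hj
      have hj' := h j hj
      rw [hC10]
      by_cases hj0 : j = 0
      · simp only [if_pos hj0] at hj' ⊢
        rw [hj', zmod2_add11]
      · simp only [if_neg hj0] at hj' ⊢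
        exact hj'
  · rw [hx 1]
    unfold distDist
    congr 1
    refine Finset.filter_congr fun r _ => ?_
    rcases key r with ⟨h1, heq⟩ | ⟨h0, heq⟩
    · simp only [h1, and_true, eq_iff_iff]
      omega
    · simp only [h0, eq_iff_iff]
      constructor
      · intro h; omega
      · rintro ⟨-, h⟩; exact absurd h.symm (by decide)
  · intro i hi1 hi2
    rw [hx (i + 1), hy (i - 1)]
    unfold distDist
    rw [← Finset.card_filter_add_card_filter_not
      (s := Finset.univ.filter fun r => hammingDist (C10 r) 0 = i)
      (p := fun r => C r 0 = 1), Finset.filter_filter, Finset.filter_filter]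
    congr 1
    · congr 1
      refine Finset.filter_congr fun r _ => ?_
      rcases key r with ⟨h1, heq⟩ | ⟨h0, heq⟩
      · simp only [h1, and_true, eq_iff_iff]
        omega
      · simp only [h0, eq_iff_iff]
        constructor
        · rintro ⟨h, h'⟩; exact absurd h'.symm (by decide)
        · rintro ⟨-, h⟩; exact absurd h.symm (by decide)
    · congr 1
      refine Finset.filter_congr fun r _ => ?_
      rcases key r with ⟨h1, heq⟩ | ⟨h0, heq⟩
      · constructor
        · rintro ⟨-, h⟩; exact absurd h1 h
        · rintro ⟨-, h⟩; rw [h1] at h; exact absurd h (by decide)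
      · simp only [h0, and_true, eq_iff_iff, zmod2_ne_one]
        omega
  · rw [hy n]
    unfold distDist
    congr 1
    refine Finset.filter_congr fun r _ => ?_
    rcases key r with ⟨h1, heq⟩ | ⟨h0, heq⟩
    · constructor
      · intro h; have := hle r; omega
      · rintro ⟨-, h⟩; rw [h1] at h; exact absurd h (by decide)
    · simp only [h0, and_true, eq_iff_iff]
      omega
end

section
/- There exists no binary orthogonal array of parameters (10, 192, 5); that is, there is no function C : Fin 192 → (Fin 10 → ZMod 2) such that for every set of 5 distinct column indices and every tuple v ∈ (ZMod 2)^5, exactly 6 rows of C agree with v on those columns. -/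
namespace BOA

def eps : ZMod 2 → ℤ := fun z => if z = 0 then 1 else -1
lemma eps_zero : eps 0 = 1 := rfl
lemma eps_add (x y : ZMod 2) : eps (x + y) = eps x * eps y := by revert x y; decide
lemma eps_one : eps 1 = -1 := rfl

/-- Orthogonality: sum over subsets T of D of eps(∑_{i∈T} y i). -/
lemma sum_powerset_eps (D : Finset (Fin 10)) (y : Fin 10 → ZMod 2) :
    ∑ T ∈ D.powerset, eps (∑ i ∈ T, y i) =
      if (∀ i ∈ D, y i = 0) then (2:ℤ)^D.card else 0 := by
  induction D using Finset.induction_on with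
  | empty => simp [eps_zero]
  | @insert a D ha ih =>
    rw [Finset.powerset_insert, Finset.sum_union, Finset.sum_image]
    · have h1 : ∀ T ∈ D.powerset, eps (∑ i ∈ insert a T, y i) = eps (y a) * eps (∑ i ∈ T, y i) := by
        intro T hT
        have haT : a ∉ T := fun h => ha (Finset.mem_powerset.mp hT h)
        rw [Finset.sum_insert haT, eps_add]
      rw [Finset.sum_congr rfl h1, ← Finset.mul_sum, ih]
      rcases (show ∀ z : ZMod 2, z = 0 ∨ z = 1 by decide) (y a) with h | h
      · simp only [h, eps_zero, one_mul]
        by_cases hD : ∀ i ∈ D, y i = 0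
        · have : ∀ i ∈ insert a D, y i = 0 := by
            intro i hi; rcases Finset.mem_insert.mp hi with rfl | hi
            · exact h
            · exact hD i hi
          simp only [if_pos hD, if_pos this, Finset.card_insert_of_notMem ha, pow_succ]
          ring
        · have : ¬ (∀ i ∈ insert a D, y i = 0) := by
            intro hcon; exact hD (fun i hi => hcon i (Finset.mem_insert_of_mem hi))
          rw [if_neg hD, if_neg this, Finset.forall_mem_insert] at *
          · simp
          
      · have hna : ¬ (∀ i ∈ insert a D, y i = 0) := by
          intro hcon
          have := hcon a (Finset.mem_insert_self a D)
          rw [h] at this; exact one_ne_zero this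
        rw [if_neg hna, h, eps_one]
        ring
    · intro T hT U hU hTU
      have haT : a ∉ T := fun h => ha (Finset.mem_powerset.mp hT h)
      have haU : a ∉ U := fun h => ha (Finset.mem_powerset.mp hU h)
      have : (insert a T).erase a = (insert a U).erase a := by rw [hTU]
      rwa [Finset.erase_insert haT, Finset.erase_insert haU] at this
    · rw [Finset.disjoint_right]
      intro T hT hT'
      rcases Finset.mem_image.mp hT with ⟨U, hU, rfl⟩
      exact ha (Finset.mem_powerset.mp hT' (Finset.mem_insert_self a U))



section Main

variable (C : Fin 192 → (Fin 10 → ZMod 2))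

def Ff (T : Finset (Fin 10)) : ℤ := ∑ r : Fin 192, eps (∑ i ∈ T, C r i)

lemma Ff_empty : Ff C ∅ = 192 := by
  simp [Ff, eps_zero]

variable (H : ∀ S : Finset (Fin 10), S.card = 5 →
        ∀ v : Fin 10 → ZMod 2,
          (Finset.univ.filter (fun r => ∀ j ∈ S, C r j = v j)).card = 6)

/-- cancellation over patterns: for T ⊆ S nonempty -/
lemma sum_patterns_eps (S T : Finset (Fin 10)) (hTS : T ⊆ S) (hT : T.Nonempty) :
    ∑ U ∈ S.powerset, eps ((↑(T ∩ U).card : ZMod 2)) = 0 := by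
  obtain ⟨a, haT⟩ := hT
  have haS : a ∈ S := hTS haT
  apply Finset.sum_involution
    (g := fun U _ => if a ∈ U then U.erase a else insert a U)
  · intro U hU
    by_cases h : a ∈ U
    · simp only [if_pos h]
      have : (T ∩ U).card = (T ∩ U.erase a).card + 1 := by
        have h1 : T ∩ U = insert a (T ∩ U.erase a) := by
          ext x
          simp only [Finset.mem_inter, Finset.mem_insert, Finset.mem_erase]
          constructor
          · rintro ⟨hxT, hxU⟩
            by_cases hxa : x = a
            · exact Or.inl hxa
            · exact Or.inr ⟨hxT, hxa, hxU⟩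
          · rintro (rfl | ⟨h1, h2, h3⟩)
            · exact ⟨haT, h⟩
            · exact ⟨h1, h3⟩
        rw [h1, Finset.card_insert_of_notMem (by simp)]
      rw [this]
      push_cast
      rw [eps_add, eps_one]
      ring
    · simp only [if_neg h]
      have : (T ∩ insert a U).card = (T ∩ U).card + 1 := by
        have h1 : T ∩ insert a U = insert a (T ∩ U) := by
          ext x
          simp only [Finset.mem_inter, Finset.mem_insert]
          constructor
          · rintro ⟨hxT, rfl | hxU⟩
            · exact Or.inl rfl
            · exact Or.inr ⟨hxT, hxU⟩
          · rintro (rfl | ⟨h1, h2⟩)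
            · exact ⟨haT, Or.inl rfl⟩
            · exact ⟨h1, Or.inr h2⟩
        rw [h1, Finset.card_insert_of_notMem (by simp [h])]
      rw [this]
      push_cast
      rw [eps_add, eps_one]
      ring
  · intro U hU hne
    by_cases h : a ∈ U
    · simp only [if_pos h]
      intro hcon
      rw [← hcon] at h
      exact (Finset.notMem_erase a U) h
    · simp only [if_neg h]
      intro hcon
      rw [← hcon] at h
      exact h (Finset.mem_insert_self a U)
  · intro U hU
    by_cases h : a ∈ U
    · simp only [if_pos h, Finset.mem_erase, ne_eq, not_true_eq_false, false_and, if_false]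
      exact Finset.insert_erase h
    · simp only [if_neg h, Finset.mem_insert_self, if_true]
      exact Finset.erase_insert h
  · intro U hU
    by_cases h : a ∈ U
    · simp only [if_pos h]
      exact Finset.mem_powerset.mpr ((Finset.erase_subset a U).trans (Finset.mem_powerset.mp hU))
    · simp only [if_neg h]
      exact Finset.mem_powerset.mpr (Finset.insert_subset haS (Finset.mem_powerset.mp hU))

include H in
lemma Ff_vanish (T : Finset (Fin 10)) (h1 : T.Nonempty) (h5 : T.card ≤ 5) :
    Ff C T = 0 := by
  obtain ⟨S, hTS, hS5⟩ := Finset.exists_superset_card_eq h5 (by simp)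
  -- group rows by pattern g r = S.filter (C r · = 1)
  set g : Fin 192 → Finset (Fin 10) := fun r => S.filter (fun i => C r i = 1) with hg
  have hmaps : ∀ r ∈ (Finset.univ : Finset (Fin 192)), g r ∈ S.powerset := by
    intro r _; exact Finset.mem_powerset.mpr (Finset.filter_subset _ _)
  have key : ∀ r : Fin 192, (∑ i ∈ T, C r i) = ((T ∩ g r).card : ZMod 2) := by
    intro r
    have : ∀ i ∈ T, C r i = if i ∈ g r then (1 : ZMod 2) else 0 := by
      intro i hi
      by_cases hmem : i ∈ g r
      · simp only [if_pos hmem]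
        exact (Finset.mem_filter.mp hmem).2
      · simp only [if_neg hmem]
        have hiS : i ∈ S := hTS hi
        rcases (show ∀ z : ZMod 2, z = 0 ∨ z = 1 by decide) (C r i) with h | h
        · exact h
        · exact absurd (Finset.mem_filter.mpr ⟨hiS, h⟩) hmem
    rw [Finset.sum_congr rfl this, Finset.sum_ite_mem]
    simp [Finset.sum_const, nsmul_eq_mul]
  have grp : Ff C T = ∑ U ∈ S.powerset, ∑ r ∈ Finset.univ.filter (fun r => g r = U),
      eps ((T ∩ U).card : ZMod 2) := by
    rw [Ff]
    rw [← Finset.sum_fiberwise_of_maps_to hmaps (fun r => eps (∑ i ∈ T, C r i))]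
    apply Finset.sum_congr rfl
    intro U hU
    apply Finset.sum_congr rfl
    intro r hr
    rw [key r, (Finset.mem_filter.mp hr).2]
  have card6 : ∀ U ∈ S.powerset,
      (Finset.univ.filter (fun r => g r = U)).card = 6 := by
    intro U hU
    have hUS := Finset.mem_powerset.mp hU
    have : Finset.univ.filter (fun r => g r = U)
        = Finset.univ.filter (fun r => ∀ j ∈ S, C r j = (fun i => if i ∈ U then (1:ZMod 2) else 0) j) := by
      apply Finset.filter_congr
      intro r _
      simp only [hg]
      constructor
      · rintro rfl
        intro j hj
        by_cases hmem : j ∈ S.filter (fun i => C r i = 1)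
        · simp only [if_pos hmem]
          exact (Finset.mem_filter.mp hmem).2
        · simp only [if_neg hmem]
          rcases (show ∀ z : ZMod 2, z = 0 ∨ z = 1 by decide) (C r j) with h | h
          · exact h
          · exact absurd (Finset.mem_filter.mpr ⟨hj, h⟩) hmem
      · intro hv
        ext i
        simp only [Finset.mem_filter]
        constructor
        · rintro ⟨hiS, hi1⟩
          have := hv i hiS
          rw [hi1] at this
          by_contra hiU
          rw [if_neg hiU] at this
          exact one_ne_zero this
        · intro hiU
          refine ⟨hUS hiU, ?_⟩
          have := hv i (hUS hiU)
          rwa [if_pos hiU] at this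
    rw [this]
    exact H S hS5 _
  rw [grp]
  have : ∀ U ∈ S.powerset, ∑ r ∈ Finset.univ.filter (fun r => g r = U),
      eps ((T ∩ U).card : ZMod 2) = 6 * eps ((T ∩ U).card : ZMod 2) := by
    intro U hU
    rw [Finset.sum_const, card6 U hU]
    simp
  rw [Finset.sum_congr rfl this, ← Finset.mul_sum,
    sum_patterns_eps S T hTS h1, mul_zero]

end Main
end BOA

-- chunk C: inversion identity, e/φ definitions (to be appended after chunk B content)
section ChunkC
namespace BOA
variable (C : Fin 192 → (Fin 10 → ZMod 2))

def Nv (D : Finset (Fin 10)) : ℤ :=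
  ((Finset.univ.filter (fun r : Fin 192 => ∀ i ∈ D, C r i = 0)).card : ℤ)

lemma sum_powerset_Ff (D : Finset (Fin 10)) :
    ∑ T ∈ D.powerset, Ff C T = 2 ^ D.card * Nv C D := by
  unfold Ff Nv
  rw [Finset.sum_comm]
  have : ∀ r : Fin 192, ∑ T ∈ D.powerset, eps (∑ i ∈ T, C r i)
      = if (∀ i ∈ D, C r i = 0) then (2:ℤ)^D.card else 0 := fun r => sum_powerset_eps D (C r)
  rw [Finset.sum_congr rfl (fun r _ => this r)]
  rw [Finset.sum_ite, Finset.sum_const, Finset.sum_const]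
  simp [mul_comm]

def ev (D : Finset (Fin 10)) : ℤ := Nv C D - 3

def phi7 (D : Finset (Fin 10)) : ℤ :=
  2 * Nv C D - 3 - ∑ T ∈ Finset.powersetCard 6 D, ev C T

def phi8 (D : Finset (Fin 10)) : ℤ :=
  4 * Nv C D - 3 - (∑ T ∈ Finset.powersetCard 6 D, ev C T)
    - (∑ T ∈ Finset.powersetCard 7 D, phi7 C T)

def phi9 (D : Finset (Fin 10)) : ℤ :=
  8 * Nv C D - 3 - (∑ T ∈ Finset.powersetCard 6 D, ev C T)
    - (∑ T ∈ Finset.powersetCard 7 D, phi7 C T)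
    - (∑ T ∈ Finset.powersetCard 8 D, phi8 C T)

variable (H : ∀ S : Finset (Fin 10), S.card = 5 →
        ∀ v : Fin 10 → ZMod 2,
          (Finset.univ.filter (fun r => ∀ j ∈ S, C r j = v j)).card = 6)

include H in
/-- decomposition of the powerset sum using vanishing -/
lemma sum_powerset_decomp (D : Finset (Fin 10)) (hD : 6 ≤ D.card) :
    ∑ T ∈ D.powerset, Ff C T
      = 192 + ∑ k ∈ Finset.Icc 6 D.card, ∑ T ∈ Finset.powersetCard k D, Ff C T := by
  rw [Finset.sum_powerset]
  have h0 : ∑ T ∈ Finset.powersetCard 0 D, Ff C T = 192 := by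
    rw [Finset.powersetCard_zero]
    simp [Ff_empty]
  have hrange : Finset.range (D.card + 1) = insert 0 (Finset.Icc 1 D.card) := by
    ext k
    simp [Finset.mem_range, Finset.mem_Icc, Nat.lt_succ_iff]
    omega
  rw [hrange, Finset.sum_insert (by simp), h0]
  congr 1
  have hsplit : Finset.Icc 1 D.card = Finset.Icc 1 5 ∪ Finset.Icc 6 D.card := by
    ext k
    simp [Finset.mem_Icc, Finset.mem_union]
    omega
  rw [hsplit, Finset.sum_union (by
    rw [Finset.disjoint_left]
    intro k hk hk'
    simp only [Finset.mem_Icc] at hk hk'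
    omega)]
  have hlow : ∀ k ∈ Finset.Icc 1 5, ∑ T ∈ Finset.powersetCard k D, Ff C T = 0 := by
    intro k hk
    simp only [Finset.mem_Icc] at hk
    apply Finset.sum_eq_zero
    intro T hT
    obtain ⟨hTD, hTc⟩ := Finset.mem_powersetCard.mp hT
    exact Ff_vanish C H T (Finset.card_pos.mp (by omega)) (by omega)
  rw [Finset.sum_congr rfl hlow]
  simp

include H in
lemma Ff_six (D : Finset (Fin 10)) (hD : D.card = 6) :
    Ff C D = 64 * ev C D := by
  have h := sum_powerset_decomp C H D (by omega)
  rw [sum_powerset_Ff] at h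
  rw [hD] at h
  have hself : Finset.powersetCard 6 D = {D} := by
    rw [← hD]; exact Finset.powersetCard_self D
  rw [Finset.Icc_self, Finset.sum_singleton, hself, Finset.sum_singleton] at h
  unfold ev
  omega

include H in
lemma Ff_seven (D : Finset (Fin 10)) (hD : D.card = 7) :
    Ff C D = 64 * phi7 C D := by
  have h := sum_powerset_decomp C H D (by omega)
  rw [sum_powerset_Ff] at h
  rw [hD] at h
  have hself : Finset.powersetCard 7 D = {D} := by
    rw [← hD]; exact Finset.powersetCard_self D
  rw [show (7:ℕ) = 6 + 1 from rfl, Finset.sum_Icc_succ_top (by norm_num),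
    Finset.Icc_self, Finset.sum_singleton, hself, Finset.sum_singleton] at h
  have h6 : ∑ T ∈ Finset.powersetCard 6 D, Ff C T
      = 64 * ∑ T ∈ Finset.powersetCard 6 D, ev C T := by
    rw [Finset.mul_sum]
    apply Finset.sum_congr rfl
    intro T hT
    exact Ff_six C H T (Finset.mem_powersetCard.mp hT).2
  rw [h6] at h
  unfold phi7
  omega

include H in
lemma Ff_eight (D : Finset (Fin 10)) (hD : D.card = 8) :
    Ff C D = 64 * phi8 C D := by
  have h := sum_powerset_decomp C H D (by omega)
  rw [sum_powerset_Ff] at h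
  rw [hD] at h
  have hself : Finset.powersetCard 8 D = {D} := by
    rw [← hD]; exact Finset.powersetCard_self D
  rw [show (8:ℕ) = 6 + 1 + 1 from rfl, Finset.sum_Icc_succ_top (by norm_num),
    Finset.sum_Icc_succ_top (by norm_num),
    Finset.Icc_self, Finset.sum_singleton, hself, Finset.sum_singleton] at h
  have h6 : ∑ T ∈ Finset.powersetCard 6 D, Ff C T
      = 64 * ∑ T ∈ Finset.powersetCard 6 D, ev C T := by
    rw [Finset.mul_sum]
    exact Finset.sum_congr rfl (fun T hT => Ff_six C H T (Finset.mem_powersetCard.mp hT).2)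
  have h7 : ∑ T ∈ Finset.powersetCard 7 D, Ff C T
      = 64 * ∑ T ∈ Finset.powersetCard 7 D, phi7 C T := by
    rw [Finset.mul_sum]
    exact Finset.sum_congr rfl (fun T hT => Ff_seven C H T (Finset.mem_powersetCard.mp hT).2)
  rw [h6, h7] at h
  unfold phi8
  omega

include H in
lemma Ff_nine (D : Finset (Fin 10)) (hD : D.card = 9) :
    Ff C D = 64 * phi9 C D := by
  have h := sum_powerset_decomp C H D (by omega)
  rw [sum_powerset_Ff] at h
  rw [hD] at h
  have hself : Finset.powersetCard 9 D = {D} := by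
    rw [← hD]; exact Finset.powersetCard_self D
  rw [show (9:ℕ) = 6 + 1 + 1 + 1 from rfl, Finset.sum_Icc_succ_top (by norm_num),
    Finset.sum_Icc_succ_top (by norm_num), Finset.sum_Icc_succ_top (by norm_num),
    Finset.Icc_self, Finset.sum_singleton, hself, Finset.sum_singleton] at h
  have h6 : ∑ T ∈ Finset.powersetCard 6 D, Ff C T
      = 64 * ∑ T ∈ Finset.powersetCard 6 D, ev C T := by
    rw [Finset.mul_sum]
    exact Finset.sum_congr rfl (fun T hT => Ff_six C H T (Finset.mem_powersetCard.mp hT).2)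
  have h7 : ∑ T ∈ Finset.powersetCard 7 D, Ff C T
      = 64 * ∑ T ∈ Finset.powersetCard 7 D, phi7 C T := by
    rw [Finset.mul_sum]
    exact Finset.sum_congr rfl (fun T hT => Ff_seven C H T (Finset.mem_powersetCard.mp hT).2)
  have h8 : ∑ T ∈ Finset.powersetCard 8 D, Ff C T
      = 64 * ∑ T ∈ Finset.powersetCard 8 D, phi8 C T := by
    rw [Finset.mul_sum]
    exact Finset.sum_congr rfl (fun T hT => Ff_eight C H T (Finset.mem_powersetCard.mp hT).2)
  rw [h6, h7, h8] at h
  unfold phi9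
  omega

end BOA
end ChunkC
section ChunkD
namespace BOA

/-- number of k-subsets of D containing a fixed m-subset U -/
lemma card_supersets {D U : Finset (Fin 10)} {k : ℕ} (hUD : U ⊆ D) (hk : U.card ≤ k) :
    ((Finset.powersetCard k D).filter (fun T => U ⊆ T)).card
      = (D.card - U.card).choose (k - U.card) := by
  rw [← Finset.card_sdiff_of_subset hUD, ← Finset.card_powersetCard (k - U.card) (D \ U)]
  apply Finset.card_bij (fun T _ => T \ U)
  · intro T hT
    simp only [Finset.mem_filter, Finset.mem_powersetCard] at hT
    obtain ⟨⟨hTD, hTk⟩, hUT⟩ := hT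
    rw [Finset.mem_powersetCard]
    constructor
    · exact Finset.sdiff_subset_sdiff hTD (le_refl U)
    · rw [Finset.card_sdiff_of_subset hUT, hTk]
  · intro T hT T' hT' hEq
    simp only [Finset.mem_filter, Finset.mem_powersetCard] at hT hT'
    have h1 : T = (T \ U) ∪ U := by
      rw [Finset.sdiff_union_self_eq_union, Finset.union_eq_left.mpr hT.2]
    have h2 : T' = (T' \ U) ∪ U := by
      rw [Finset.sdiff_union_self_eq_union, Finset.union_eq_left.mpr hT'.2]
    rw [h1, h2, hEq]
  · intro V hV
    rw [Finset.mem_powersetCard] at hV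
    refine ⟨V ∪ U, ?_, ?_⟩
    · simp only [Finset.mem_filter, Finset.mem_powersetCard]
      refine ⟨⟨Finset.union_subset (hV.1.trans (Finset.sdiff_subset)) hUD, ?_⟩,
        Finset.subset_union_right⟩
      rw [Finset.card_union_of_disjoint, hV.2]
      · omega
      · exact Finset.disjoint_of_subset_left hV.1 Finset.sdiff_disjoint
    · rw [Finset.union_sdiff_right, Finset.sdiff_eq_self_iff_disjoint.mpr]
      exact Finset.disjoint_of_subset_left hV.1 Finset.sdiff_disjoint

/-- swap: double sums over nested subsets -/
lemma sum_nested (D : Finset (Fin 10)) (k m : ℕ) (hmk : m ≤ k) (x : Finset (Fin 10) → ZMod 2) :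
    ∑ T ∈ Finset.powersetCard k D, ∑ U ∈ Finset.powersetCard m T, x U
      = ∑ U ∈ Finset.powersetCard m D, ((D.card - m).choose (k - m)) • x U := by
  have step1 : ∀ T ∈ Finset.powersetCard k D,
      ∑ U ∈ Finset.powersetCard m T, x U
        = ∑ U ∈ Finset.powersetCard m D, if U ⊆ T then x U else 0 := by
    intro T hT
    rw [Finset.mem_powersetCard] at hT
    rw [Finset.sum_ite, Finset.sum_const_zero, add_zero]
    apply Finset.sum_congr
    · ext U
      simp only [Finset.mem_powersetCard, Finset.mem_filter]
      constructor
      · intro ⟨h1, h2⟩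
        exact ⟨⟨h1.trans hT.1, h2⟩, h1⟩
      · intro ⟨⟨h1, h2⟩, h3⟩
        exact ⟨h3, h2⟩
    · intros; rfl
  rw [Finset.sum_congr rfl step1, Finset.sum_comm]
  apply Finset.sum_congr rfl
  intro U hU
  rw [Finset.mem_powersetCard] at hU
  rw [Finset.sum_ite, Finset.sum_const_zero, add_zero, Finset.sum_const]
  rw [card_supersets hU.1 (hU.2 ▸ hmk), hU.2]

variable (C : Fin 192 → (Fin 10 → ZMod 2))

/-- parity function -/
def av (T : Finset (Fin 10)) : ZMod 2 := ((ev C T : ℤ) : ZMod 2)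

lemma phi7_parity (D : Finset (Fin 10)) (_hD : D.card = 7) :
    ((phi7 C D : ℤ) : ZMod 2) = 1 + ∑ T ∈ Finset.powersetCard 6 D, av C T := by
  unfold phi7
  push_cast
  have e6 : ∑ x ∈ Finset.powersetCard 6 D, ((ev C x : ℤ) : ZMod 2)
      = ∑ T ∈ Finset.powersetCard 6 D, av C T := rfl
  rw [e6]
  generalize ((Nv C D : ℤ) : ZMod 2) = a
  generalize (∑ T ∈ Finset.powersetCard 6 D, av C T) = b
  revert a b
  decide

lemma phi8_parity (D : Finset (Fin 10)) (hD : D.card = 8) :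
    ((phi8 C D : ℤ) : ZMod 2) = 1 + ∑ T ∈ Finset.powersetCard 6 D, av C T := by
  unfold phi8
  push_cast
  have e6 : ∑ x ∈ Finset.powersetCard 6 D, ((ev C x : ℤ) : ZMod 2)
      = ∑ T ∈ Finset.powersetCard 6 D, av C T := rfl
  have h7 : ∑ T ∈ Finset.powersetCard 7 D, ((phi7 C T : ℤ) : ZMod 2)
      = (Nat.choose 8 7) • (1 : ZMod 2)
        + (Nat.choose 2 1) • ∑ T ∈ Finset.powersetCard 6 D, av C T := by
    rw [Finset.sum_congr rfl (fun T hT => phi7_parity C T (Finset.mem_powersetCard.mp hT).2),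
      Finset.sum_add_distrib, Finset.sum_const, Finset.card_powersetCard, hD,
      sum_nested D 7 6 (by norm_num) (av C), hD, ← Finset.smul_sum]
  rw [e6, h7]
  generalize ((Nv C D : ℤ) : ZMod 2) = a
  generalize (∑ T ∈ Finset.powersetCard 6 D, av C T) = b
  revert a b
  decide

lemma phi9_parity (D : Finset (Fin 10)) (hD : D.card = 9) :
    ((phi9 C D : ℤ) : ZMod 2) = ∑ T ∈ Finset.powersetCard 6 D, av C T := by
  unfold phi9
  push_cast
  have e6 : ∑ x ∈ Finset.powersetCard 6 D, ((ev C x : ℤ) : ZMod 2)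
      = ∑ T ∈ Finset.powersetCard 6 D, av C T := rfl
  have h7 : ∑ T ∈ Finset.powersetCard 7 D, ((phi7 C T : ℤ) : ZMod 2)
      = (Nat.choose 9 7) • (1 : ZMod 2)
        + (Nat.choose 3 1) • ∑ T ∈ Finset.powersetCard 6 D, av C T := by
    rw [Finset.sum_congr rfl (fun T hT => phi7_parity C T (Finset.mem_powersetCard.mp hT).2),
      Finset.sum_add_distrib, Finset.sum_const, Finset.card_powersetCard, hD,
      sum_nested D 7 6 (by norm_num) (av C), hD, ← Finset.smul_sum]
  have h8 : ∑ T ∈ Finset.powersetCard 8 D, ((phi8 C T : ℤ) : ZMod 2)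
      = (Nat.choose 9 8) • (1 : ZMod 2)
        + (Nat.choose 3 2) • ∑ T ∈ Finset.powersetCard 6 D, av C T := by
    rw [Finset.sum_congr rfl (fun T hT => phi8_parity C T (Finset.mem_powersetCard.mp hT).2),
      Finset.sum_add_distrib, Finset.sum_const, Finset.card_powersetCard, hD,
      sum_nested D 8 6 (by norm_num) (av C), hD, ← Finset.smul_sum]
  rw [e6, h7, h8]
  generalize ((Nv C D : ℤ) : ZMod 2) = a
  generalize (∑ T ∈ Finset.powersetCard 6 D, av C T) = b
  revert a b
  decide

end BOA
end ChunkD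
section ChunkE
set_option maxRecDepth 4000
namespace BOA
variable (C : Fin 192 → (Fin 10 → ZMod 2))

lemma master (w : Fin 10 → ZMod 2) :
    ∑ T ∈ (Finset.univ : Finset (Fin 10)).powerset, (Ff C T)^2 * eps (∑ i ∈ T, w i)
      = 1024 * ((Finset.univ.filter
          (fun rs : Fin 192 × Fin 192 => ∀ i ∈ Finset.univ, C rs.1 i + C rs.2 i + w i = 0)).card : ℤ) := by
  have expand : ∀ T : Finset (Fin 10), (Ff C T)^2 * eps (∑ i ∈ T, w i)
      = ∑ rs : Fin 192 × Fin 192, eps (∑ i ∈ T, (C rs.1 i + C rs.2 i + w i)) := by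
    intro T
    rw [Ff, sq, Finset.sum_mul_sum]
    rw [← Finset.sum_product', Finset.sum_mul]
    rw [← Finset.univ_product_univ]
    apply Finset.sum_congr rfl
    intro rs _
    rw [← eps_add, ← eps_add, ← Finset.sum_add_distrib, ← Finset.sum_add_distrib]
  rw [Finset.sum_congr rfl (fun T _ => expand T), Finset.sum_comm]
  have inner : ∀ rs : Fin 192 × Fin 192,
      ∑ T ∈ (Finset.univ : Finset (Fin 10)).powerset, eps (∑ i ∈ T, (C rs.1 i + C rs.2 i + w i))
        = if (∀ i ∈ (Finset.univ : Finset (Fin 10)), C rs.1 i + C rs.2 i + w i = 0)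
            then 1024 else 0 := by
    intro rs
    rw [sum_powerset_eps Finset.univ (fun i => C rs.1 i + C rs.2 i + w i),
      Finset.card_univ, Fintype.card_fin]
    norm_num
  rw [Finset.sum_congr rfl (fun rs _ => inner rs)]
  rw [Finset.sum_ite, Finset.sum_const, Finset.sum_const_zero, add_zero]
  simp [mul_comm]

def Pc : ℕ := (Finset.univ.filter
    (fun rs : Fin 192 × Fin 192 => ∀ i ∈ Finset.univ, C rs.1 i + C rs.2 i + (0:ZMod 2) = 0)).card

lemma parseval :
    ∑ T ∈ (Finset.univ : Finset (Fin 10)).powerset, (Ff C T)^2 = 1024 * (Pc C : ℤ) := by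
  have := master C (fun _ => 0)
  simp only [Finset.sum_const_zero, eps_zero, mul_one] at this
  rw [this]
  rfl

lemma Pc_ge : 192 ≤ Pc C := by
  unfold Pc
  have : ∀ r : Fin 192, (r, r) ∈ Finset.univ.filter
      (fun rs : Fin 192 × Fin 192 => ∀ i ∈ Finset.univ, C rs.1 i + C rs.2 i + (0:ZMod 2) = 0) := by
    intro r
    simp only [Finset.mem_filter, Finset.mem_univ, true_and]
    intro i _
    rw [add_zero]
    exact (show ∀ z : ZMod 2, z + z = 0 by decide) _
  calc (192 : ℕ) = (Finset.univ : Finset (Fin 192)).card := by rw [Finset.card_univ, Fintype.card_fin]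
    _ ≤ _ := Finset.card_le_card_of_injOn (fun r => (r, r)) (fun r _ => this r)
        (fun a _ b _ h => ((Prod.mk.injEq _ _ _ _).mp h).1)

lemma nonneg_shift (i : Fin 10) :
    0 ≤ ∑ T ∈ (Finset.univ : Finset (Fin 10)).powerset,
      (Ff C T)^2 * (if i ∈ T then (-1:ℤ) else 1) := by
  have key : ∀ T : Finset (Fin 10),
      (if i ∈ T then (-1:ℤ) else 1) = eps (∑ j ∈ T, (fun k => if k = i then (1:ZMod 2) else 0) j) := by
    intro T
    rw [Finset.sum_ite_eq' T i (fun _ => (1:ZMod 2))]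
    by_cases h : i ∈ T
    · rw [if_pos h, if_pos h, eps_one]
    · rw [if_neg h, if_neg h, eps_zero]
  rw [Finset.sum_congr rfl (fun T _ => by rw [key T])]
  rw [master C _]
  positivity

lemma sum_signs (T : Finset (Fin 10)) :
    ∑ i : Fin 10, (if i ∈ T then (-1:ℤ) else 1) = 10 - 2 * (T.card : ℤ) := by
  rw [Finset.sum_ite, Finset.sum_const, Finset.sum_const]
  have h1 : (Finset.univ.filter (fun i => i ∈ T)) = T := by
    ext i; simp
  have h2 : (Finset.univ.filter (fun i => i ∉ T)).card = 10 - T.card := by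
    have := Finset.card_filter_add_card_filter_not
      (s := (Finset.univ : Finset (Fin 10))) (p := fun i => i ∈ T)
    rw [h1] at this
    simp only [Finset.card_univ, Fintype.card_fin] at this
    omega
  rw [h1, h2]
  simp only [nsmul_eq_mul, mul_neg_one, mul_one]
  have hT : T.card ≤ 10 := by
    calc T.card ≤ (Finset.univ : Finset (Fin 10)).card := Finset.card_le_card (Finset.subset_univ T)
      _ = 10 := by simp
  omega

lemma TOT_le :
    2 * ∑ T ∈ (Finset.univ : Finset (Fin 10)).powerset, (Ff C T)^2 * (T.card : ℤ)
      ≤ 10 * (1024 * (Pc C : ℤ)) := by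
  have h := Finset.sum_nonneg (s := (Finset.univ : Finset (Fin 10)))
    (f := fun i => ∑ T ∈ (Finset.univ : Finset (Fin 10)).powerset,
      (Ff C T)^2 * (if i ∈ T then (-1:ℤ) else 1)) (fun i _ => nonneg_shift C i)
  rw [Finset.sum_comm] at h
  have h2 : ∀ T : Finset (Fin 10),
      ∑ i : Fin 10, (Ff C T)^2 * (if i ∈ T then (-1:ℤ) else 1)
        = (Ff C T)^2 * (10 - 2 * (T.card : ℤ)) := by
    intro T
    rw [← Finset.mul_sum, sum_signs]
  rw [Finset.sum_congr rfl (fun T _ => h2 T)] at h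
  have h3 : ∑ T ∈ (Finset.univ : Finset (Fin 10)).powerset,
      (Ff C T)^2 * (10 - 2 * (T.card : ℤ))
      = 10 * ∑ T ∈ (Finset.univ : Finset (Fin 10)).powerset, (Ff C T)^2
        - 2 * ∑ T ∈ (Finset.univ : Finset (Fin 10)).powerset, (Ff C T)^2 * (T.card : ℤ) := by
    rw [Finset.mul_sum, Finset.mul_sum, ← Finset.sum_sub_distrib]
    apply Finset.sum_congr rfl
    intro T _
    ring
  rw [h3, parseval] at h
  linarith

end BOA
end ChunkE
section ChunkF
set_option maxRecDepth 4000
namespace BOA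

lemma zmod2_one_iff (n : ℕ) : ((n : ℕ) : ZMod 2) = 1 ↔ Odd n := by
  rw [← ZMod.natCast_mod n 2, Nat.odd_iff]
  constructor
  · intro h
    by_contra hne
    have h0 : n % 2 = 0 := by omega
    rw [h0] at h
    exact absurd h (by decide)
  · intro h
    rw [h]
    rfl

lemma zmod2_zero_iff (n : ℕ) : ((n : ℕ) : ZMod 2) = 0 ↔ Even n := by
  rw [← ZMod.natCast_mod n 2, Nat.even_iff]
  constructor
  · intro h
    by_contra hne
    have h0 : n % 2 = 1 := by omega
    rw [h0] at h
    exact absurd h (by decide)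
  · intro h
    rw [h]
    rfl

lemma int_zmod2_one_iff (k : ℤ) : ((k : ℤ) : ZMod 2) = 1 ↔ Odd k := by
  constructor
  · intro h
    rw [← Int.not_even_iff_odd]
    intro hcon
    obtain ⟨m, rfl⟩ := hcon
    have : ((m + m : ℤ) : ZMod 2) = 0 := by
      push_cast
      exact (show ∀ z : ZMod 2, z + z = 0 by decide) _
    rw [this] at h
    exact absurd h (by decide)
  · rintro ⟨m, rfl⟩
    push_cast
    rw [show ((2:ZMod 2)) = 0 by decide]
    ring

lemma sum_zmod2 {α : Type*} [DecidableEq α] (s : Finset α) (f : α → ZMod 2) :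
    ∑ x ∈ s, f x = (((s.filter (fun x => f x = 1)).card : ℕ) : ZMod 2) := by
  rw [← Finset.sum_filter_add_sum_filter_not s (fun x => f x = 1)]
  have h1 : ∑ x ∈ s.filter (fun x => f x = 1), f x
      = ∑ _x ∈ s.filter (fun x => f x = 1), (1 : ZMod 2) :=
    Finset.sum_congr rfl (fun x hx => (Finset.mem_filter.mp hx).2)
  have h2 : ∑ x ∈ s.filter (fun x => ¬ f x = 1), f x = 0 := by
    apply Finset.sum_eq_zero
    intro x hx
    have := (Finset.mem_filter.mp hx).2
    exact (show ∀ z : ZMod 2, ¬ z = 1 → z = 0 by decide) _ this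
  rw [h1, h2, add_zero, Finset.sum_const, nsmul_eq_mul, mul_one]

variable (C : Fin 192 → (Fin 10 → ZMod 2))

def cnt (D : Finset (Fin 10)) : ℕ := ((Finset.powersetCard 6 D).filter (fun T => av C T = 1)).card

lemma sum_av_cnt (D : Finset (Fin 10)) :
    ∑ T ∈ Finset.powersetCard 6 D, av C T = ((cnt C D : ℕ) : ZMod 2) := by
  exact sum_zmod2 _ _

lemma pc6_erase (D : Finset (Fin 10)) (j : Fin 10) :
    Finset.powersetCard 6 (D.erase j) = (Finset.powersetCard 6 D).filter (fun T => j ∉ T) := by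
  ext T
  simp only [Finset.mem_powersetCard, Finset.mem_filter, Finset.subset_erase]
  tauto

lemma cnt_erase (D : Finset (Fin 10)) (j : Fin 10) :
    cnt C (D.erase j) = ((Finset.powersetCard 6 D).filter (fun T => av C T = 1 ∧ j ∉ T)).card := by
  unfold cnt
  rw [pc6_erase, Finset.filter_filter]
  congr 1
  apply Finset.filter_congr
  intro T _
  tauto

lemma card_erase_univ (i : Fin 10) : (Finset.univ.erase i).card = 9 := by
  rw [Finset.card_erase_of_mem (Finset.mem_univ i), Finset.card_univ, Fintype.card_fin]

/-- F1: double counting -/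
lemma F1 (i : Fin 10) :
    ∑ j ∈ Finset.univ.erase i, cnt C ((Finset.univ.erase i).erase j)
      = 3 * cnt C (Finset.univ.erase i) := by
  have step : ∀ j ∈ Finset.univ.erase i,
      cnt C ((Finset.univ.erase i).erase j)
        = ∑ T ∈ (Finset.powersetCard 6 (Finset.univ.erase i)).filter (fun T => av C T = 1),
            if j ∉ T then 1 else 0 := by
    intro j _
    rw [cnt_erase, ← Finset.filter_filter]
    exact Finset.card_filter _ _
  rw [Finset.sum_congr rfl step, Finset.sum_comm]
  have inner : ∀ T ∈ (Finset.powersetCard 6 (Finset.univ.erase i)).filter (fun T => av C T = 1),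
      (∑ j ∈ Finset.univ.erase i, if j ∉ T then 1 else 0) = 3 := by
    intro T hT
    obtain ⟨hTmem, _⟩ := Finset.mem_filter.mp hT
    obtain ⟨hTsub, hTcard⟩ := Finset.mem_powersetCard.mp hTmem
    rw [← Finset.card_filter]
    rw [← Finset.sdiff_eq_filter]
    rw [Finset.card_sdiff_of_subset hTsub, card_erase_univ, hTcard]
  rw [Finset.sum_congr rfl inner, Finset.sum_const, smul_eq_mul, mul_comm]
  rfl

/-- F2: if cnt at a point is even, some pair through it is even -/
lemma F2 (i : Fin 10) (h : Even (cnt C (Finset.univ.erase i))) :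
    ∃ j ∈ Finset.univ.erase i, Even (cnt C ((Finset.univ.erase i).erase j)) := by
  by_contra hcon
  push_neg at hcon
  have hodd : ∀ j ∈ Finset.univ.erase i, Odd (cnt C ((Finset.univ.erase i).erase j)) := by
    intro j hj
    rcases Nat.even_or_odd (cnt C ((Finset.univ.erase i).erase j)) with he | ho
    · exact absurd he (hcon j hj)
    · exact ho
  have hcast : ((∑ j ∈ Finset.univ.erase i, cnt C ((Finset.univ.erase i).erase j) : ℕ) : ZMod 2) = 1 := by
    rw [Nat.cast_sum]
    have : ∀ j ∈ Finset.univ.erase i,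
        ((cnt C ((Finset.univ.erase i).erase j) : ℕ) : ZMod 2) = 1 := by
      intro j hj
      exact (zmod2_one_iff _).mpr (hodd j hj)
    rw [Finset.sum_congr rfl this, Finset.sum_const, card_erase_univ]
    decide
  rw [F1] at hcast
  have : ((3 * cnt C (Finset.univ.erase i) : ℕ) : ZMod 2) = 0 := by
    rw [Nat.cast_mul]
    rw [(zmod2_zero_iff _).mpr h]
    ring
  rw [this] at hcast
  exact absurd hcast (by decide)

end BOA
end ChunkF
section ChunkG
set_option maxRecDepth 4000
namespace BOA

variable (C : Fin 192 → (Fin 10 → ZMod 2))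

def oddPts : Finset (Fin 10) :=
  Finset.univ.filter (fun i => Odd (cnt C (Finset.univ.erase i)))

def evenPairs : Finset (Finset (Fin 10)) :=
  (Finset.powersetCard 2 (Finset.univ : Finset (Fin 10))).filter
    (fun P => Even (cnt C (Finset.univ \ P)))

lemma sdiff_pair (i j : Fin 10) (hij : j ≠ i) :
    (Finset.univ : Finset (Fin 10)) \ (insert i {j}) = (Finset.univ.erase i).erase j := by
  ext x
  simp only [Finset.mem_sdiff, Finset.mem_univ, true_and, Finset.mem_insert,
    Finset.mem_singleton, Finset.mem_erase, ne_eq]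
  tauto

lemma F3 : 10 ≤ 2 * (evenPairs C).card + (oddPts C).card := by
  classical
  set evenPts := Finset.univ.filter
    (fun i : Fin 10 => ¬ Odd (cnt C (Finset.univ.erase i))) with hEP
  have hpart : (oddPts C).card + evenPts.card = 10 := by
    rw [hEP]
    unfold oddPts
    rw [Finset.card_filter_add_card_filter_not, Finset.card_univ, Fintype.card_fin]
  have hex : ∀ i : Fin 10, ∃ j, i ∈ evenPts →
      (j ∈ Finset.univ.erase i ∧ Even (cnt C ((Finset.univ.erase i).erase j))) := by
    intro i
    by_cases hi : i ∈ evenPts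
    · have h2 := (Finset.mem_filter.mp hi).2
      have heven : Even (cnt C (Finset.univ.erase i)) := Nat.not_odd_iff_even.mp h2
      obtain ⟨j, hj1, hj2⟩ := F2 C i heven
      exact ⟨j, fun _ => ⟨hj1, hj2⟩⟩
    · exact ⟨i, fun h => absurd h hi⟩
  choose gg hgg using hex
  set f : Fin 10 → Finset (Fin 10) := fun i => insert i {gg i} with hf
  have hne : ∀ i ∈ evenPts, gg i ≠ i := fun i hi =>
    Finset.ne_of_mem_erase ((hgg i hi).1)
  have hcard2 : ∀ i ∈ evenPts, (f i).card = 2 := by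
    intro i hi
    rw [hf]
    simp only []
    rw [Finset.card_insert_of_notMem (by
      simp only [Finset.mem_singleton]
      exact fun h => (hne i hi) h.symm), Finset.card_singleton]
  have hfmem : ∀ i ∈ evenPts, f i ∈ evenPairs C := by
    intro i hi
    unfold evenPairs
    rw [Finset.mem_filter, Finset.mem_powersetCard]
    refine ⟨⟨Finset.subset_univ _, hcard2 i hi⟩, ?_⟩
    rw [show (Finset.univ \ f i) = (Finset.univ.erase i).erase (gg i) from
      sdiff_pair i (gg i) (hne i hi)]
    exact (hgg i hi).2
  have himg : evenPts.image f ⊆ evenPairs C := by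
    intro P hP
    obtain ⟨i, hi, rfl⟩ := Finset.mem_image.mp hP
    exact hfmem i hi
  have hfiber : ∀ P ∈ evenPts.image f, (evenPts.filter (fun i => f i = P)).card ≤ 2 := by
    intro P hP
    obtain ⟨i0, hi0, rfl⟩ := Finset.mem_image.mp hP
    have hsub : evenPts.filter (fun i => f i = f i0) ⊆ f i0 := by
      intro x hx
      obtain ⟨_, hfx⟩ := Finset.mem_filter.mp hx
      rw [← hfx]
      exact Finset.mem_insert_self x _
    calc (evenPts.filter (fun i => f i = f i0)).card ≤ (f i0).card := Finset.card_le_card hsub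
      _ = 2 := hcard2 i0 hi0
  have h1 : evenPts.card ≤ 2 * (evenPts.image f).card :=
    Finset.card_le_mul_card_image evenPts 2 hfiber
  have h2 : (evenPts.image f).card ≤ (evenPairs C).card := Finset.card_le_card himg
  omega

variable (H : ∀ S : Finset (Fin 10), S.card = 5 →
        ∀ v : Fin 10 → ZMod 2,
          (Finset.univ.filter (fun r => ∀ j ∈ S, C r j = v j)).card = 6)

lemma odd_sq_ge (k : ℤ) (h : Odd k) : 1 ≤ k^2 := by
  have h1 : 1 ≤ k ∨ k ≤ -1 := by
    obtain ⟨m, rfl⟩ := h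
    omega
  rcases h1 with h1 | h1 <;> nlinarith

lemma card_sdiff_pair (P : Finset (Fin 10)) (hP : P ∈ Finset.powersetCard 2 Finset.univ) :
    ((Finset.univ : Finset (Fin 10)) \ P).card = 8 := by
  obtain ⟨hPs, hPc⟩ := Finset.mem_powersetCard.mp hP
  rw [Finset.card_sdiff_of_subset hPs, Finset.card_univ, Fintype.card_fin, hPc]

include H in
lemma odd_phi8 (P : Finset (Fin 10)) (hP : P ∈ evenPairs C) :
    Odd (phi8 C (Finset.univ \ P)) := by
  obtain ⟨hPmem, hPev⟩ := Finset.mem_filter.mp hP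
  rw [← int_zmod2_one_iff]
  rw [phi8_parity C _ (card_sdiff_pair P hPmem), sum_av_cnt]
  rw [(zmod2_zero_iff _).mpr hPev, add_zero]

include H in
lemma odd_phi9 (i : Fin 10) (hi : i ∈ oddPts C) :
    Odd (phi9 C (Finset.univ.erase i)) := by
  obtain ⟨_, hodd⟩ := Finset.mem_filter.mp hi
  rw [← int_zmod2_one_iff]
  rw [phi9_parity C _ (card_erase_univ i), sum_av_cnt]
  exact (zmod2_one_iff _).mpr hodd

include H in
theorem final_contradiction : False := by
  classical
  set g : Finset (Fin 10) → ℤ := fun T => (Ff C T)^2 * ((T.card : ℤ) - 6) with hgdef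
  set E8 := (evenPairs C).image (fun P => Finset.univ \ P) with hE8
  set E9 := (oddPts C).image (fun i => Finset.univ.erase i) with hE9
  have hE8card : E8.card = (evenPairs C).card := by
    rw [hE8]
    apply Finset.card_image_of_injOn
    intro P _ Q _ hPQ
    have h1 : Finset.univ \ (Finset.univ \ P) = P := by
      rw [Finset.sdiff_sdiff_self_left, Finset.univ_inter]
    have h2 : Finset.univ \ (Finset.univ \ Q) = Q := by
      rw [Finset.sdiff_sdiff_self_left, Finset.univ_inter]
    rw [← h1, ← h2]
    simp only at hPQ
    rw [hPQ]
  have hE9card : E9.card = (oddPts C).card := by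
    rw [hE9]
    apply Finset.card_image_of_injOn
    intro i _ j _ hij
    by_contra hcne
    simp only at hij
    have hj : j ∈ Finset.univ.erase i :=
      Finset.mem_erase.mpr ⟨fun h => hcne h.symm, Finset.mem_univ j⟩
    rw [hij] at hj
    exact (Finset.notMem_erase j _) hj
  have hcard8 : ∀ T ∈ E8, T.card = 8 := by
    intro T hT
    obtain ⟨P, hP, rfl⟩ := Finset.mem_image.mp hT
    exact card_sdiff_pair P (Finset.mem_filter.mp hP).1
  have hcard9 : ∀ T ∈ E9, T.card = 9 := by
    intro T hT
    obtain ⟨i, _, rfl⟩ := Finset.mem_image.mp hT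
    exact card_erase_univ i
  have h8bound : ∀ T ∈ E8, 8192 ≤ g T := by
    intro T hT
    obtain ⟨P, hP, rfl⟩ := Finset.mem_image.mp hT
    have hc : ((Finset.univ : Finset (Fin 10)) \ P).card = 8 :=
      card_sdiff_pair P (Finset.mem_filter.mp hP).1
    have hFf := Ff_eight C H _ hc
    have h1 : 1 ≤ (phi8 C (Finset.univ \ P))^2 := odd_sq_ge _ (odd_phi8 C H P hP)
    rw [hgdef]
    simp only
    rw [hFf, hc]
    have he : ((8:ℕ):ℤ) - 6 = 2 := by norm_num
    rw [he]
    have hr : (64 * phi8 C (Finset.univ \ P))^2 * 2 = 8192 * (phi8 C (Finset.univ \ P))^2 := by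
      ring
    rw [hr]
    linarith
  have h9bound : ∀ T ∈ E9, 12288 ≤ g T := by
    intro T hT
    obtain ⟨i, hi, rfl⟩ := Finset.mem_image.mp hT
    have hc := card_erase_univ i
    have hFf := Ff_nine C H _ hc
    have h1 : 1 ≤ (phi9 C (Finset.univ.erase i))^2 := odd_sq_ge _ (odd_phi9 C H i hi)
    rw [hgdef]
    simp only
    rw [hFf, hc]
    have he : ((9:ℕ):ℤ) - 6 = 3 := by norm_num
    rw [he]
    have hr : (64 * phi9 C (Finset.univ.erase i))^2 * 3 = 12288 * (phi9 C (Finset.univ.erase i))^2 := by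
      ring
    rw [hr]
    linarith
  -- global sums
  have hQ := parseval C
  have hPcge := Pc_ge C
  have hTOTle := TOT_le C
  set Spow := (Finset.univ : Finset (Fin 10)).powerset with hSpow
  set TOT := ∑ T ∈ Spow, (Ff C T)^2 * (T.card : ℤ) with hTOT
  have hdecomp : ∑ T ∈ Spow, g T = TOT - 6 * (1024 * (Pc C : ℤ)) := by
    rw [hTOT, ← hQ, hgdef, Finset.mul_sum, ← Finset.sum_sub_distrib]
    apply Finset.sum_congr rfl
    intro T _
    ring
  have hempty_mem : ∅ ∈ Spow := Finset.mem_powerset.mpr (Finset.empty_subset _)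
  have hsplit : ∑ T ∈ Spow.erase ∅, g T + g ∅ = ∑ T ∈ Spow, g T :=
    Finset.sum_erase_add Spow g hempty_mem
  have hgempty : g ∅ = -221184 := by
    rw [hgdef]
    simp only [Finset.card_empty, Ff_empty]
    norm_num
  have hsub : E8 ∪ E9 ⊆ Spow.erase ∅ := by
    intro T hT
    have hc : T.card = 8 ∨ T.card = 9 := by
      rcases Finset.mem_union.mp hT with h | h
      · exact Or.inl (hcard8 T h)
      · exact Or.inr (hcard9 T h)
    rw [Finset.mem_erase]
    constructor
    · intro hcon
      rw [hcon] at hc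
      simp at hc
    · exact Finset.mem_powerset.mpr (Finset.subset_univ T)
  have hnonneg : ∀ T ∈ Spow.erase ∅, T ∉ E8 ∪ E9 → 0 ≤ g T := by
    intro T hT _
    have hTne : T ≠ ∅ := (Finset.mem_erase.mp hT).1
    have hTnonempty : T.Nonempty := Finset.nonempty_iff_ne_empty.mpr hTne
    by_cases hc : T.card ≤ 5
    · rw [hgdef]
      simp only
      rw [Ff_vanish C H T hTnonempty hc]
      norm_num
    · rw [hgdef]
      simp only
      apply mul_nonneg (sq_nonneg _)
      have : 6 ≤ T.card := by omega
      have : (6:ℤ) ≤ (T.card : ℤ) := by exact_mod_cast this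
      linarith
  have hdisj : Disjoint E8 E9 := by
    rw [Finset.disjoint_left]
    intro T h8 h9
    have := hcard8 T h8
    have := hcard9 T h9
    omega
  have hsumE : ∑ T ∈ E8 ∪ E9, g T = ∑ T ∈ E8, g T + ∑ T ∈ E9, g T :=
    Finset.sum_union hdisj
  have hs8 : (E8.card : ℤ) * 8192 ≤ ∑ T ∈ E8, g T := by
    have := Finset.card_nsmul_le_sum E8 g 8192 h8bound
    rwa [nsmul_eq_mul] at this
  have hs9 : (E9.card : ℤ) * 12288 ≤ ∑ T ∈ E9, g T := by
    have := Finset.card_nsmul_le_sum E9 g 12288 h9bound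
    rwa [nsmul_eq_mul] at this
  have hmono : ∑ T ∈ E8 ∪ E9, g T ≤ ∑ T ∈ Spow.erase ∅, g T :=
    Finset.sum_le_sum_of_subset_of_nonneg hsub hnonneg
  -- final arithmetic
  have hF3 := F3 C
  have hF3' : (10 : ℤ) ≤ 2 * ((evenPairs C).card : ℤ) + ((oddPts C).card : ℤ) := by
    exact_mod_cast hF3
  have hB : (E8.card : ℤ) = ((evenPairs C).card : ℤ) := by exact_mod_cast hE8card
  have hC : (E9.card : ℤ) = ((oddPts C).card : ℤ) := by exact_mod_cast hE9card
  have hPcge' : (192 : ℤ) ≤ (Pc C : ℤ) := by exact_mod_cast hPcge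
  linarith [hs8, hs9, hmono, hsumE, hsplit, hgempty, hdecomp, hTOTle, hF3', hPcge']

end BOA
end ChunkG

theorem stmt_12 :
    ¬ ∃ C : Fin 192 → (Fin 10 → ZMod 2),
      ∀ S : Finset (Fin 10), S.card = 5 →
        ∀ v : Fin 10 → ZMod 2,
          (Finset.univ.filter (fun r => ∀ j ∈ S, C r j = v j)).card = 6 := by
  rintro ⟨C, H⟩
  exact BOA.final_contradiction C H
end

section
/- There exists no binary orthogonal array of parameters (11, 112, 4); that is, there is no function C : Fin 112 → (Fin 11 → ZMod 2) such that for every set of 4 distinct column indices and every tuple v ∈ (ZMod 2)^4, exactly 7 rows of C agree with v on those columns. -/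
/-!
Write the rows as sign vectors `ε_r ∈ {±1}^11` and put `T(W) = ∑_r ∏_{j ∈ W} ε_{r j}`. Since
`∑_{W ⊆ S} T(W) = 2^|S| · #{r | C r = 0 on S}`, strength 4 forces `T(W) = 0` for `1 ≤ |W| ≤ 4`, and,
the index 7 being odd, `T(W) ≡ 16 (mod 32)` for `5 ≤ |W| ≤ 7`.

For two rows `r, r'` put `η = ε_r ε_{r'}`; every term of `∑_{b ≠ c} (1 - η_b) ∏_{j ∉ {b, c}} (1 + η_j)`
is nonnegative, and summing over all pairs of rows turns it into the linear-programming certificate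
`∑_W (11 - |W|)(10 - 2|W|) T(W)^2 ≥ 0`. But `W = ∅` contributes `110 · 112^2`, each of the 462 sets
of size 6 and 330 sets of size 7 contributes at most `-10 · 16^2` and `-16 · 16^2`, and no other term
is positive, so the sum is negative.
-/

open Finset

namespace Finset

variable {κ : Type*} [DecidableEq κ]

theorem sum_sum_powerset_erase {M : Type*} [AddCommMonoid M] (A : Finset κ)
    (g : Finset κ → M) :
    ∑ c ∈ A, ∑ W ∈ (A.erase c).powerset, g W = ∑ W ∈ A.powerset, #(A \ W) • g W := by
  rw [sum_comm' (t' := A.powerset) (s' := fun W => A \ W)]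
  · exact sum_congr rfl fun W _ => sum_const _
  · intro c W
    simp only [mem_powerset, mem_sdiff, subset_erase]
    tauto

variable {R : Type*} [CommRing R]

theorem sum_prod_erase_one_add (A : Finset κ) (x : κ → R) :
    ∑ b ∈ A, ∏ j ∈ A.erase b, (1 + x j) = ∑ W ∈ A.powerset, #(A \ W) • ∏ j ∈ W, x j := by
  simp only [prod_one_add, sum_sum_powerset_erase]

theorem sum_one_sub_mul_prod_erase_one_add (A : Finset κ) (x : κ → R) :
    ∑ b ∈ A, (1 - x b) * ∏ j ∈ A.erase b, (1 + x j)
      = ∑ W ∈ A.powerset, (2 * #(A \ W) - #A : ℤ) • ∏ j ∈ W, x j := by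
  have hsplit : ∀ b ∈ A, (1 - x b) * ∏ j ∈ A.erase b, (1 + x j)
      = 2 * ∏ j ∈ A.erase b, (1 + x j) - ∏ j ∈ A, (1 + x j) := by
    intro b hb
    rw [← mul_prod_erase A (fun j => 1 + x j) hb]
    ring
  rw [sum_congr rfl hsplit, sum_sub_distrib, ← mul_sum, sum_prod_erase_one_add, sum_const,
    prod_one_add, mul_sum, smul_sum, ← sum_sub_distrib]
  refine sum_congr rfl fun W _ => ?_
  simp only [nsmul_eq_mul, zsmul_eq_mul]
  push_cast
  ring

theorem sum_sum_one_sub_mul_prod_erase_erase_one_add (A : Finset κ) (x : κ → R) :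
    ∑ c ∈ A, ∑ b ∈ A.erase c, (1 - x b) * ∏ j ∈ (A.erase c).erase b, (1 + x j)
      = ∑ W ∈ A.powerset, (#(A \ W) * (2 * #(A \ W) - 1 - #A) : ℤ) • ∏ j ∈ W, x j := by
  have hcard : ∀ c ∈ A, ∀ W ∈ (A.erase c).powerset,
      (2 * #((A.erase c) \ W) - #(A.erase c) : ℤ) = 2 * #(A \ W) - 1 - #A := by
    intro c hc W hW
    rw [mem_powerset] at hW
    have hcW : c ∉ W := fun h => by simpa using hW h
    rw [erase_sdiff_comm, card_erase_of_mem (mem_sdiff.2 ⟨hc, hcW⟩), card_erase_of_mem hc,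
      Nat.cast_sub (card_pos.2 ⟨c, mem_sdiff.2 ⟨hc, hcW⟩⟩),
      Nat.cast_sub (card_pos.2 ⟨c, hc⟩)]
    ring
  rw [sum_congr rfl fun c hc => (sum_one_sub_mul_prod_erase_one_add _ x).trans
    (sum_congr rfl fun W hW => by rw [hcard c hc W hW]), sum_sum_powerset_erase]
  refine sum_congr rfl fun W _ => ?_
  simp only [nsmul_eq_mul, zsmul_eq_mul]
  push_cast
  ring

end Finset

theorem Int.sq_le_sq_of_modEq_two_mul {m x : ℤ} (h : x ≡ m [ZMOD 2 * m]) : m ^ 2 ≤ x ^ 2 := by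
  obtain ⟨k, hk⟩ := h.symm.dvd
  have hx : x = m * (2 * k + 1) := by linarith
  have hodd : 1 ≤ (2 * k + 1) ^ 2 := by rcases le_or_gt 0 k with hk | hk <;> nlinarith
  rw [hx, mul_pow]
  nlinarith [sq_nonneg m]

namespace OrthogonalArray

variable {ι κ : Type*} [Fintype ι]

def agreeCount (C : ι → κ → ZMod 2) (S : Finset κ) (v : κ → ZMod 2) : ℕ :=
  #{r | ∀ j ∈ S, C r j = v j}

def IsOrthogonalArray (C : ι → κ → ZMod 2) (t ℓ : ℕ) : Prop :=
  ∀ S : Finset κ, #S = t → ∀ v, agreeCount C S v = ℓ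

def pmOne (x : ZMod 2) : ℤ := if x = 0 then 1 else -1

def charSum (C : ι → κ → ZMod 2) (W : Finset κ) : ℤ :=
  ∑ r, ∏ j ∈ W, pmOne (C r j)

variable (C : ι → κ → ZMod 2)

theorem agreeCount_empty (v : κ → ZMod 2) : agreeCount C ∅ v = Fintype.card ι := by
  simp [agreeCount]

theorem agreeCount_eq_add [DecidableEq κ] {S : Finset κ} {j : κ} (hj : j ∉ S) (v : κ → ZMod 2) :
    agreeCount C S v = agreeCount C (insert j S) (Function.update v j 0)
      + agreeCount C (insert j S) (Function.update v j 1) := by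
  have hfilter : ∀ b : ZMod 2, ({r | ∀ i ∈ insert j S, C r i = Function.update v j b i} : Finset ι)
      = {r ∈ ({r | ∀ i ∈ S, C r i = v i} : Finset ι) | C r j = b} := by
    intro b
    ext r
    simp only [mem_filter, mem_univ, true_and, forall_mem_insert, Function.update_self]
    refine ⟨fun ⟨hjb, hS⟩ => ⟨fun i hi => ?_, hjb⟩, fun ⟨hS, hjb⟩ => ⟨hjb, fun i hi => ?_⟩⟩
    all_goals rw [hS i hi, Function.update_of_ne (ne_of_mem_of_not_mem hi hj)]
  have hone : ∀ b : ZMod 2, ¬b = 0 ↔ b = 1 := by decide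
  rw [agreeCount, agreeCount, agreeCount, hfilter, hfilter,
    ← card_filter_add_card_filter_not (p := fun r => C r j = 0)]
  simp only [hone]

theorem IsOrthogonalArray.agreeCount_eq {C : ι → κ → ZMod 2} {t ℓ : ℕ}
    (hC : IsOrthogonalArray C t ℓ) [Fintype κ] (ht : t ≤ Fintype.card κ) {S : Finset κ}
    (hS : #S ≤ t) (v : κ → ZMod 2) : agreeCount C S v = ℓ * 2 ^ (t - #S) := by
  classical
  induction h : t - #S generalizing S v with
  | zero => rw [hC S (by omega) v, pow_zero, mul_one]
  | succ n ih =>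
    obtain ⟨j, hj⟩ : ∃ j, j ∉ S := by
      by_contra! hall
      have := card_le_card (fun j _ => hall j : (univ : Finset κ) ⊆ S)
      rw [card_univ] at this
      omega
    have hcard : #(insert j S) = #S + 1 := card_insert_of_notMem hj
    rw [agreeCount_eq_add C hj, ih (by omega) _ (by omega), ih (by omega) _ (by omega)]
    ring

theorem IsOrthogonalArray.card_eq {C : ι → κ → ZMod 2} {t ℓ : ℕ}
    (hC : IsOrthogonalArray C t ℓ) [Fintype κ] (ht : t ≤ Fintype.card κ) :
    Fintype.card ι = ℓ * 2 ^ t := by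
  rw [← agreeCount_empty C 0, hC.agreeCount_eq ht (by simp), card_empty, Nat.sub_zero]

theorem one_add_pmOne (x : ZMod 2) : 1 + pmOne x = if x = 0 then 2 else 0 := by
  unfold pmOne; split_ifs <;> norm_num

theorem pmOne_mul_pmOne_mem_Icc (x y : ZMod 2) : pmOne x * pmOne y ∈ Set.Icc (-1) 1 := by
  unfold pmOne; split_ifs <;> norm_num

theorem charSum_empty : charSum C ∅ = Fintype.card ι := by
  simp [charSum]

theorem sum_powerset_charSum (S : Finset κ) :
    ∑ W ∈ S.powerset, charSum C W = 2 ^ #S * agreeCount C S 0 := by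
  have hrow : ∀ r, ∏ j ∈ S, (1 + pmOne (C r j)) = if ∀ j ∈ S, C r j = 0 then 2 ^ #S else 0 := by
    intro r
    simp only [one_add_pmOne, prod_ite_zero, prod_const]
  simp only [charSum]
  rw [sum_comm]
  simp only [← prod_one_add, hrow, sum_ite, sum_const_zero, add_zero, sum_const, agreeCount,
    Pi.zero_apply, nsmul_eq_mul]
  ring

theorem IsOrthogonalArray.charSum_eq_zero {C : ι → κ → ZMod 2} {t ℓ : ℕ}
    (hC : IsOrthogonalArray C t ℓ) [Fintype κ] (ht : t ≤ Fintype.card κ) {W : Finset κ}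
    (hW : W.Nonempty) (hWt : #W ≤ t) : charSum C W = 0 := by
  classical
  induction W using strongInduction with
  | H W ih =>
    have hsum := sum_powerset_charSum C W
    rw [hC.agreeCount_eq ht hWt, ← sum_erase_add _ _ (mem_powerset_self W),
      sum_eq_single_of_mem ∅ (mem_erase.2 ⟨hW.ne_empty.symm, empty_mem_powerset W⟩)] at hsum
    · rw [charSum_empty, hC.card_eq ht] at hsum
      push_cast at hsum
      rw [← mul_assoc, mul_comm _ (ℓ : ℤ), mul_assoc, ← pow_add, Nat.add_sub_cancel' hWt] at hsum
      linarith
    · intro V hV hV0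
      rw [mem_erase, mem_powerset] at hV
      exact ih V (hV.2.ssubset_of_ne hV.1) (nonempty_iff_ne_empty.2 hV0)
        ((card_le_card hV.2).trans hWt)

theorem IsOrthogonalArray.charSum_modEq {C : ι → κ → ZMod 2} {ℓ : ℕ}
    (hC : IsOrthogonalArray C 4 ℓ) (hℓ : Odd ℓ) [Fintype κ] {S : Finset κ} (h5 : 5 ≤ #S)
    (h7 : #S ≤ 7) : charSum C S ≡ 16 [ZMOD 32] := by
  classical
  have ht : 4 ≤ Fintype.card κ := by have := card_le_univ S; omega
  refine (ZMod.intCast_eq_intCast_iff _ _ 32).1 ?_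
  induction S using strongInduction with
  | H S ih =>
    let f : ℕ → ZMod 32 := fun k => if 1 ≤ k ∧ k ≤ 4 then 0 else 16
    have hf : ∀ W ∈ S.powerset.erase S, (charSum C W : ZMod 32) = f #W := by
      intro W hW
      rw [mem_erase, mem_powerset] at hW
      have hWS : #W < #S := card_lt_card (hW.2.ssubset_of_ne hW.1)
      obtain rfl | hW0 := W.eq_empty_or_nonempty
      · obtain ⟨m, rfl⟩ := hℓ
        rw [charSum_empty, hC.card_eq ht, card_empty, show f 0 = 16 from rfl]
        push_cast
        ring_nf
        rw [show (32 : ZMod 32) = 0 from rfl, mul_zero, add_zero]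
      by_cases hW4 : #W ≤ 4
      · simp [f, hC.charSum_eq_zero ht hW0 hW4, hW0.ne_empty, hW4]
      · simp only [f]
        rw [ih W (hW.2.ssubset_of_ne hW.1) (by omega) (by omega), if_neg (by omega)]
        rfl
    have hsum := congrArg (Int.cast : ℤ → ZMod 32) (sum_powerset_charSum C S)
    rw [show #S = 5 + (#S - 5) by omega, pow_add] at hsum
    push_cast at hsum
    rw [show (32 : ZMod 32) = 0 by decide, zero_mul, zero_mul,
      ← sum_erase_add _ _ (mem_powerset_self S), sum_congr rfl hf,
      sum_erase_eq_sub (mem_powerset_self S), sum_powerset_apply_card] at hsum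
    generalize hk : #S = k at hsum h5 h7
    -- The numbers 0, 6, 28 of proper subsets of size at least 5 are even.
    interval_cases k <;> simp only [f, sum_range_succ] at hsum <;> revert hsum <;>
      generalize (charSum C S : ZMod 32) = y <;> revert y <;> decide

theorem charSum_sq (W : Finset κ) :
    charSum C W ^ 2 = ∑ r, ∑ r', ∏ j ∈ W, pmOne (C r j) * pmOne (C r' j) := by
  simp only [charSum, sq, sum_mul_sum, prod_mul_distrib]

theorem sum_coeff_mul_charSum_sq_nonneg [Fintype κ] [DecidableEq κ] :
    0 ≤ ∑ W ∈ (univ : Finset κ).powerset,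
      (#Wᶜ * (2 * #Wᶜ - 1 - Fintype.card κ) : ℤ) * charSum C W ^ 2 := by
  simp only [charSum_sq, mul_sum, compl_eq_univ_sdiff, ← card_univ (α := κ)]
  rw [sum_comm]
  refine sum_nonneg fun r _ => ?_
  rw [sum_comm]
  refine sum_nonneg fun r' _ => ?_
  have hx := fun j => pmOne_mul_pmOne_mem_Icc (C r j) (C r' j)
  simp only [← smul_eq_mul (a := ((_ : ℕ) : ℤ) * _),
    ← sum_sum_one_sub_mul_prod_erase_erase_one_add]
  refine sum_nonneg fun c _ => sum_nonneg fun b _ => mul_nonneg ?_ (prod_nonneg fun j _ => ?_)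
  · linarith [(hx b).2]
  · linarith [(hx j).1]

-- The coefficient `(11 - k) * (10 - 2 * k)` of `charSum C W ^ 2` for `#W = k`, times `112 ^ 2` at
-- `k = 0` and times the lower bound `16 ^ 2` on `charSum C W ^ 2` at `k = 6, 7`.
def termBound (k : ℕ) : ℤ :=
  if k = 0 then 110 * 112 ^ 2 else if k = 6 then -10 * 16 ^ 2 else if k = 7 then -16 * 16 ^ 2 else 0

theorem coeff_mul_charSum_sq_le {ι : Type*} [Fintype ι] {C : ι → Fin 11 → ZMod 2}
    (hC : IsOrthogonalArray C 4 7) (W : Finset (Fin 11)) :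
    (#Wᶜ * (2 * #Wᶜ - 1 - Fintype.card (Fin 11)) : ℤ) * charSum C W ^ 2 ≤ termBound #W := by
  have ht : 4 ≤ Fintype.card (Fin 11) := by simp
  have hzero : W.Nonempty → #W ≤ 4 → charSum C W = 0 := hC.charSum_eq_zero ht
  have hsq : 5 ≤ #W → #W ≤ 7 → 16 ^ 2 ≤ charSum C W ^ 2 := fun h5 h7 =>
    Int.sq_le_sq_of_modEq_two_mul (hC.charSum_modEq ⟨3, rfl⟩ h5 h7)
  obtain rfl | hW0 := W.eq_empty_or_nonempty
  · simp [charSum_empty, hC.card_eq ht, termBound]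
  have h11 : #W ≤ 11 := card_le_univ W |>.trans_eq (Fintype.card_fin 11)
  rw [card_compl, Fintype.card_fin]
  generalize #W = k at hzero hsq h11 ⊢
  have hsq0 := sq_nonneg (charSum C W)
  interval_cases k <;> norm_num [termBound, hzero hW0]
  all_goals first | linarith | linarith [hsq (by norm_num) (by norm_num)]

end OrthogonalArray

open OrthogonalArray in
theorem stmt_14 :
    ¬ ∃ C : Fin 112 → (Fin 11 → ZMod 2),
      ∀ S : Finset (Fin 11), S.card = 4 →
        ∀ v : Fin 11 → ZMod 2,
          (Finset.univ.filter (fun r => ∀ j ∈ S, C r j = v j)).card = 7 := by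
  rintro ⟨C, hC⟩
  have hOA : IsOrthogonalArray C 4 7 := fun S hS v => by
    unfold agreeCount
    -- the two filters differ only in their decidability instances
    convert hC S hS v
  have hneg : ∑ W ∈ (univ : Finset (Fin 11)).powerset, termBound #W < 0 := by
    rw [sum_powerset_apply_card]
    norm_num [sum_range_succ, termBound, Nat.choose]
  exact hneg.not_ge <| (sum_coeff_mul_charSum_sq_nonneg C).trans <|
    sum_le_sum fun W _ => coeff_mul_charSum_sq_le hOA W
end

section
/- There exists no binary orthogonal array of parameters (11, 224, 5); that is, there is no function C : Fin 224 → (Fin 11 → ZMod 2) such that for every set of 5 distinct column indices and every tuple v ∈ (ZMod 2)^5, exactly 7 rows of C agree with v on those columns. -/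
set_option maxRecDepth 8000

open Finset

namespace BOA15

def eps : ZMod 2 → ℤ := fun c => if c = 0 then 1 else -1

lemma eps_or (c : ZMod 2) : eps c = 1 ∨ eps c = -1 := by
  unfold eps; split <;> simp

lemma eps_zero : eps 0 = 1 := rfl

lemma eps_add_one (c : ZMod 2) : eps (c + 1) = - eps c := by revert c; decide

lemma zmod2_add_one_add_one (c : ZMod 2) : c + 1 + 1 = c := by revert c; decide

lemma zmod2_add_one_ne (c : ZMod 2) : c + 1 ≠ c := by revert c; decide

lemma eps_succ_zero {c : ZMod 2} (h : c ≠ 0) : eps c + 1 = 0 := by revert h; revert c; decide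

def chi (A : Finset (Fin 11)) (x : Fin 11 → ZMod 2) : ℤ := ∏ j ∈ A, eps (x j)

section WithC

variable (C : Fin 224 → Fin 11 → ZMod 2)

def SF (A : Finset (Fin 11)) : ℤ := ∑ r : Fin 224, chi A (C r)

def nz (A : Finset (Fin 11)) : ℕ := (Finset.univ.filter (fun r => ∀ j ∈ A, C r j = 0)).card

lemma SF_empty : SF C ∅ = 224 := by
  simp [SF, chi]

lemma inversion (A : Finset (Fin 11)) :
    ∑ B ∈ A.powerset, SF C B = 2 ^ A.card * (nz C A : ℤ) := by
  unfold SF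
  rw [Finset.sum_comm]
  have h1 : ∀ r : Fin 224, ∑ B ∈ A.powerset, chi B (C r)
      = if (∀ j ∈ A, C r j = 0) then (2:ℤ) ^ A.card else 0 := by
    intro r
    have := Finset.prod_add (fun j => eps (C r j)) (fun _ => (1:ℤ)) A
    simp only [Finset.prod_const_one, mul_one] at this
    rw [show ∑ B ∈ A.powerset, chi B (C r) = ∏ i ∈ A, (eps (C r i) + 1) from this.symm]
    split
    · next h =>
      rw [Finset.prod_congr rfl (fun j hj => by rw [h j hj, eps_zero]; norm_num :
        ∀ j ∈ A, eps (C r j) + 1 = 2)]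
      rw [Finset.prod_const]
    · next h =>
      push_neg at h
      obtain ⟨j, hjA, hj⟩ := h
      exact Finset.prod_eq_zero hjA (eps_succ_zero hj)
  rw [Finset.sum_congr rfl (fun r _ => h1 r)]
  rw [Finset.sum_ite, Finset.sum_const, Finset.sum_const_zero, add_zero, nsmul_eq_mul, nz]
  ring

lemma chi_update (A : Finset (Fin 11)) {j0 : Fin 11} (hj0 : j0 ∈ A) (v : Fin 11 → ZMod 2) :
    chi A (Function.update v j0 (v j0 + 1)) = - chi A v := by
  unfold chi
  rw [← Finset.mul_prod_erase A _ hj0, ← Finset.mul_prod_erase A (fun j => eps (v j)) hj0]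
  rw [Function.update_self, eps_add_one]
  rw [Finset.prod_congr rfl (fun i hi => by
    rw [Function.update_of_ne (Finset.ne_of_mem_erase hi)] :
    ∀ i ∈ A.erase j0, eps (Function.update v j0 (v j0 + 1) i) = eps (v i))]
  ring

lemma SF_small (hC : ∀ S : Finset (Fin 11), S.card = 5 →
      ∀ v : Fin 11 → ZMod 2,
        (Finset.univ.filter (fun r => ∀ j ∈ S, C r j = v j)).card = 7)
    (A : Finset (Fin 11)) (hne : A.Nonempty) (h5 : A.card ≤ 5) : SF C A = 0 := by
  obtain ⟨T, hAT, hT⟩ := Finset.exists_superset_card_eq h5 (by simp)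
  classical
  set φ : Fin 224 → (Fin 11 → ZMod 2) := fun r j => if j ∈ T then C r j else 0 with hφ
  have h0 : SF C A = ∑ r : Fin 224, chi A (φ r) := by
    refine Finset.sum_congr rfl fun r _ => Finset.prod_congr rfl fun j hj => ?_
    rw [hφ]; simp [hAT hj]
  have h1 : ∑ r : Fin 224, chi A (φ r)
      = ∑ v : Fin 11 → ZMod 2, ∑ r ∈ Finset.univ.filter (fun r => φ r = v), chi A (φ r) :=
    (Finset.sum_fiberwise_of_maps_to (fun r _ => Finset.mem_univ (φ r)) _).symm
  have h2 : ∀ v : Fin 11 → ZMod 2, ∑ r ∈ Finset.univ.filter (fun r => φ r = v), chi A (φ r)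
      = ((Finset.univ.filter (fun r => φ r = v)).card : ℤ) * chi A v := by
    intro v
    rw [Finset.sum_congr rfl (fun r hr => by
      rw [(Finset.mem_filter.1 hr).2])]
    rw [Finset.sum_const, nsmul_eq_mul]
  have hcard : ∀ v : Fin 11 → ZMod 2,
      (Finset.univ.filter (fun r => φ r = v)).card
        = if (∀ j, j ∉ T → v j = 0) then 7 else 0 := by
    intro v
    split
    · next h =>
      have : Finset.univ.filter (fun r => φ r = v)
          = Finset.univ.filter (fun r => ∀ j ∈ T, C r j = v j) := by
        ext r
        simp only [Finset.mem_filter, Finset.mem_univ, true_and, funext_iff, hφ]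
        constructor
        · intro hh j hj; have := hh j; rwa [if_pos hj] at this
        · intro hh j
          by_cases hj : j ∈ T
          · rw [if_pos hj]; exact hh j hj
          · rw [if_neg hj]; exact (h j hj).symm
      rw [this]; exact hC T hT v
    · next h =>
      push_neg at h
      obtain ⟨j, hj, hvj⟩ := h
      rw [Finset.card_eq_zero, Finset.filter_eq_empty_iff]
      intro r _
      intro hEq
      apply hvj
      rw [← congrFun hEq j, hφ]
      simp [hj]
  have h3 : SF C A = ∑ v : Fin 11 → ZMod 2,
      (if (∀ j, j ∉ T → v j = 0) then (7:ℤ) * chi A v else 0) := by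
    rw [h0, h1]
    refine Finset.sum_congr rfl fun v _ => ?_
    rw [h2 v, hcard v]
    split <;> simp
  rw [h3, Finset.sum_ite, Finset.sum_const_zero, add_zero, ← Finset.mul_sum]
  obtain ⟨j0, hj0⟩ := hne
  have hzero : ∑ v ∈ Finset.univ.filter (fun v : Fin 11 → ZMod 2 => ∀ j, j ∉ T → v j = 0),
      chi A v = 0 := by
    apply Finset.sum_involution
      (g := fun v _ => Function.update v j0 (v j0 + 1))
    · intro v hv
      rw [chi_update A hj0 v]; ring
    · intro v hv _
      intro hEq
      exact zmod2_add_one_ne (v j0) (by simpa using congrFun hEq j0)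
    · intro v hv
      funext j
      rcases eq_or_ne j j0 with rfl | hne'
      · simp [zmod2_add_one_add_one]
      · simp [Function.update_of_ne hne']
    · intro v hv
      simp only [Finset.mem_filter, Finset.mem_univ, true_and] at hv ⊢
      intro j hjT
      rcases eq_or_ne j j0 with rfl | hne'
      · exact absurd (hAT hj0) hjT
      · rw [Function.update_of_ne hne']; exact hv j hjT
  rw [hzero, mul_zero]

end WithC

section Congruences

lemma split_pow (g : Finset (Fin 11) → ℤ) (A : Finset (Fin 11)) :
    ∑ B ∈ A.powerset, g B = ∑ k ∈ Finset.range (A.card + 1), ∑ B ∈ A.powersetCard k, g B := by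
  rw [← Finset.sum_fiberwise_of_maps_to
    (fun B hB => Finset.mem_range.2 (Nat.lt_succ_of_le (Finset.card_le_card (Finset.mem_powerset.1 hB))))
    g]
  exact Finset.sum_congr rfl fun k _ => Finset.sum_congr Finset.powersetCard_eq_filter.symm (fun _ _ => rfl)

variable {SF' : Finset (Fin 11) → ℤ} {nz' : Finset (Fin 11) → ℕ}

lemma mid_zero (hsmall : ∀ A : Finset (Fin 11), A.Nonempty → A.card ≤ 5 → SF' A = 0)
    (A : Finset (Fin 11)) (k : ℕ) (hk1 : 1 ≤ k) (hk5 : k ≤ 5) :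
    ∑ B ∈ A.powersetCard k, SF' B = 0 := by
  refine Finset.sum_eq_zero fun B hB => ?_
  obtain ⟨_, hcard⟩ := Finset.mem_powersetCard.1 hB
  exact hsmall B (Finset.card_pos.1 (by omega)) (by omega)

lemma sum_low (hemp : SF' ∅ = 224)
    (hsmall : ∀ A : Finset (Fin 11), A.Nonempty → A.card ≤ 5 → SF' A = 0)
    (A : Finset (Fin 11)) :
    ∑ k ∈ Finset.range 6, ∑ B ∈ A.powersetCard k, SF' B = 224 := by
  simp only [Finset.sum_range_succ (n := 5), Finset.sum_range_succ (n := 4),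
    Finset.sum_range_succ (n := 3), Finset.sum_range_succ (n := 2),
    Finset.sum_range_succ (n := 1), Finset.sum_range_one]
  rw [mid_zero hsmall A 1 (by norm_num) (by norm_num), mid_zero hsmall A 2 (by norm_num) (by norm_num),
    mid_zero hsmall A 3 (by norm_num) (by norm_num), mid_zero hsmall A 4 (by norm_num) (by norm_num),
    mid_zero hsmall A 5 (by norm_num) (by norm_num)]
  rw [Finset.powersetCard_zero, Finset.sum_singleton, hemp]
  norm_num

lemma SF6 (hinv : ∀ A : Finset (Fin 11), ∑ B ∈ A.powerset, SF' B = 2 ^ A.card * (nz' A : ℤ))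
    (hemp : SF' ∅ = 224)
    (hsmall : ∀ A : Finset (Fin 11), A.Nonempty → A.card ≤ 5 → SF' A = 0)
    (A : Finset (Fin 11)) (hA : A.card = 6) : SF' A = 64 * (nz' A : ℤ) - 224 := by
  have h := hinv A
  rw [split_pow SF' A, hA] at h
  rw [Finset.sum_range_succ, sum_low hemp hsmall A] at h
  rw [← hA, Finset.powersetCard_self, Finset.sum_singleton, hA] at h
  push_cast at h ⊢
  linarith [h]

lemma SF7 (hinv : ∀ A : Finset (Fin 11), ∑ B ∈ A.powerset, SF' B = 2 ^ A.card * (nz' A : ℤ))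
    (hemp : SF' ∅ = 224)
    (hsmall : ∀ A : Finset (Fin 11), A.Nonempty → A.card ≤ 5 → SF' A = 0)
    (A : Finset (Fin 11)) (hA : A.card = 7) : ∃ m : ℤ, SF' A = 64 * m := by
  have h := hinv A
  rw [split_pow SF' A, hA] at h
  rw [Finset.sum_range_succ, Finset.sum_range_succ, sum_low hemp hsmall A] at h
  rw [← hA, Finset.powersetCard_self, Finset.sum_singleton, hA] at h
  have hc6 : (A.powersetCard 6).card = 7 := by
    rw [Finset.card_powersetCard, hA]
    decide
  have h6 : ∑ B ∈ A.powersetCard 6, SF' B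
      = 64 * (∑ B ∈ A.powersetCard 6, (nz' B : ℤ)) - 224 * 7 := by
    rw [Finset.sum_congr rfl (fun B hB => SF6 hinv hemp hsmall B (Finset.mem_powersetCard.1 hB).2)]
    rw [Finset.sum_sub_distrib, ← Finset.mul_sum, Finset.sum_const, hc6]
    push_cast
    ring
  rw [h6] at h
  exact ⟨2 * (nz' A : ℤ) - (∑ B ∈ A.powersetCard 6, (nz' B : ℤ)) + 21, by push_cast at h ⊢; linarith⟩

lemma SF8 (hinv : ∀ A : Finset (Fin 11), ∑ B ∈ A.powerset, SF' B = 2 ^ A.card * (nz' A : ℤ))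
    (hemp : SF' ∅ = 224)
    (hsmall : ∀ A : Finset (Fin 11), A.Nonempty → A.card ≤ 5 → SF' A = 0)
    (A : Finset (Fin 11)) (hA : A.card = 8) : ∃ m : ℤ, SF' A = 64 * m + 32 := by
  have h := hinv A
  rw [split_pow SF' A, hA] at h
  rw [Finset.sum_range_succ, Finset.sum_range_succ, Finset.sum_range_succ,
    sum_low hemp hsmall A] at h
  rw [← hA, Finset.powersetCard_self, Finset.sum_singleton, hA] at h
  have hc6 : (A.powersetCard 6).card = 28 := by
    rw [Finset.card_powersetCard, hA]
    decide
  have h6 : ∑ B ∈ A.powersetCard 6, SF' B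
      = 64 * (∑ B ∈ A.powersetCard 6, (nz' B : ℤ)) - 224 * 28 := by
    rw [Finset.sum_congr rfl (fun B hB => SF6 hinv hemp hsmall B (Finset.mem_powersetCard.1 hB).2)]
    rw [Finset.sum_sub_distrib, ← Finset.mul_sum, Finset.sum_const, hc6]
    push_cast
    ring
  have h7 : (64:ℤ) ∣ ∑ B ∈ A.powersetCard 7, SF' B := by
    refine Finset.dvd_sum fun B hB => ?_
    obtain ⟨m, hm⟩ := SF7 hinv hemp hsmall B (Finset.mem_powersetCard.1 hB).2
    exact ⟨m, hm⟩
  obtain ⟨y, hy⟩ := h7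
  rw [h6, hy] at h
  exact ⟨4 * (nz' A : ℤ) - (∑ B ∈ A.powersetCard 6, (nz' B : ℤ)) - y + 94,
    by push_cast at h ⊢; linarith⟩

lemma SF6' (hinv : ∀ A : Finset (Fin 11), ∑ B ∈ A.powerset, SF' B = 2 ^ A.card * (nz' A : ℤ))
    (hemp : SF' ∅ = 224)
    (hsmall : ∀ A : Finset (Fin 11), A.Nonempty → A.card ≤ 5 → SF' A = 0)
    (A : Finset (Fin 11)) (hA : A.card = 6) : ∃ m : ℤ, SF' A = 64 * m + 32 := by
  refine ⟨(nz' A : ℤ) - 4, ?_⟩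
  rw [SF6 hinv hemp hsmall A hA]
  ring

lemma odd_sq_ge {s : ℤ} (h : ∃ m : ℤ, s = 64 * m + 32) : 1024 ≤ s ^ 2 := by
  obtain ⟨m, rfl⟩ := h
  rcases le_or_gt 0 m with hm | hm
  · nlinarith
  · nlinarith

end Congruences

section Positivity

lemma coeff_eq (A : Finset (Fin 11)) :
    (11 - 2 * (A.card : ℤ)) = ∑ j : Fin 11, (if j ∈ A then (-1 : ℤ) else 1) := by
  have h1 : ∀ j : Fin 11, (if j ∈ A then (-1 : ℤ) else 1) = 1 - 2 * (if j ∈ A then (1:ℤ) else 0) := by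
    intro j; split <;> ring
  rw [Finset.sum_congr rfl fun j _ => h1 j]
  rw [Finset.sum_sub_distrib, ← Finset.mul_sum, Finset.sum_const]
  have h2 : ∑ j : Fin 11, (if j ∈ A then (1:ℤ) else 0) = A.card := by
    rw [Finset.sum_ite_mem]
    rw [Finset.univ_inter, Finset.sum_const, nsmul_eq_mul, mul_one]
  rw [h2]
  simp

lemma prod_sign (y : Fin 11 → ℤ) (j : Fin 11) (A : Finset (Fin 11)) :
    (if j ∈ A then (-1:ℤ) else 1) * ∏ i ∈ A, y i
      = ∏ i ∈ A, (if i = j then - y i else y i) := by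
  by_cases hj : j ∈ A
  · rw [if_pos hj, ← Finset.mul_prod_erase A (fun i => if i = j then - y i else y i) hj,
      ← Finset.mul_prod_erase A y hj, if_pos rfl]
    rw [Finset.prod_congr rfl (fun i hi => if_neg (Finset.ne_of_mem_erase hi))]
    ring
  · rw [if_neg hj, one_mul]
    exact (Finset.prod_congr rfl fun i hi => if_neg (fun h => hj (by rwa [h] at hi))).symm

lemma posW (y : Fin 11 → ℤ) (hy : ∀ i, y i = 1 ∨ y i = -1) :
    0 ≤ ∑ A ∈ (Finset.univ : Finset (Fin 11)).powerset, (11 - 2 * (A.card : ℤ)) * ∏ i ∈ A, y i := by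
  have key : ∑ A ∈ (Finset.univ : Finset (Fin 11)).powerset, (11 - 2 * (A.card : ℤ)) * ∏ i ∈ A, y i
      = ∑ j : Fin 11, (1 - y j) * ∏ i ∈ Finset.univ.erase j, (y i + 1) := by
    have e1 : ∀ A ∈ (Finset.univ : Finset (Fin 11)).powerset,
        (11 - 2 * (A.card : ℤ)) * ∏ i ∈ A, y i
          = ∑ j : Fin 11, (if j ∈ A then (-1:ℤ) else 1) * ∏ i ∈ A, y i := by
      intro A _
      rw [coeff_eq, Finset.sum_mul]
    rw [Finset.sum_congr rfl e1, Finset.sum_comm]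
    refine Finset.sum_congr rfl fun j _ => ?_
    have e2 : ∑ A ∈ (Finset.univ : Finset (Fin 11)).powerset,
        (if j ∈ A then (-1:ℤ) else 1) * ∏ i ∈ A, y i
          = ∑ A ∈ (Finset.univ : Finset (Fin 11)).powerset,
              ∏ i ∈ A, (if i = j then - y i else y i) :=
      Finset.sum_congr rfl fun A _ => prod_sign y j A
    rw [e2]
    have e3 := Finset.prod_add (fun i => if i = j then - y i else y i) (fun _ => (1:ℤ))
      (Finset.univ : Finset (Fin 11))
    simp only [Finset.prod_const_one, mul_one] at e3
    rw [← e3]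
    rw [← Finset.mul_prod_erase (Finset.univ : Finset (Fin 11))
      (fun i => (if i = j then - y i else y i) + 1) (Finset.mem_univ j)]
    rw [if_pos rfl]
    rw [Finset.prod_congr rfl (fun i hi => by
      rw [if_neg (Finset.ne_of_mem_erase hi)] :
      ∀ i ∈ Finset.univ.erase j, (if i = j then - y i else y i) + 1 = y i + 1)]
    rw [neg_add_eq_sub]
  rw [key]
  refine Finset.sum_nonneg fun j _ => mul_nonneg ?_ (Finset.prod_nonneg fun i _ => ?_)
  · rcases hy j with h | h <;> rw [h] <;> norm_num
  · rcases hy i with h | h <;> rw [h] <;> norm_num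

end Positivity

end BOA15

theorem stmt_15 :
    ¬ ∃ C : Fin 224 → (Fin 11 → ZMod 2),
      ∀ S : Finset (Fin 11), S.card = 5 →
        ∀ v : Fin 11 → ZMod 2,
          (Finset.univ.filter (fun r => ∀ j ∈ S, C r j = v j)).card = 7 := by
  rintro ⟨C, hC⟩
  classical
  have hinv := BOA15.inversion C
  have hemp := BOA15.SF_empty C
  have hsmall := BOA15.SF_small C hC
  -- the quadratic form
  set Φ : ℤ := ∑ A ∈ (Finset.univ : Finset (Fin 11)).powerset,
    (11 - 2 * (A.card : ℤ)) * (BOA15.SF C A) ^ 2 with hΦ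
  -- lower bound: Φ ≥ 0
  have hpos : 0 ≤ Φ := by
    have expand : ∀ A : Finset (Fin 11), (BOA15.SF C A) ^ 2
        = ∑ r : Fin 224, ∑ r' : Fin 224, BOA15.chi A (C r) * BOA15.chi A (C r') := by
      intro A
      rw [sq, BOA15.SF, Finset.sum_mul_sum]
    have e0 : ∀ A : Finset (Fin 11), (11 - 2 * (A.card : ℤ)) * (BOA15.SF C A) ^ 2
        = ∑ r : Fin 224, ∑ r' : Fin 224,
            (11 - 2 * (A.card : ℤ)) * (BOA15.chi A (C r) * BOA15.chi A (C r')) := by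
      intro A
      rw [expand A, Finset.mul_sum]
      exact Finset.sum_congr rfl fun r _ => Finset.mul_sum _ _ _
    have e1 : Φ = ∑ r : Fin 224, ∑ r' : Fin 224,
        ∑ A ∈ (Finset.univ : Finset (Fin 11)).powerset,
          (11 - 2 * (A.card : ℤ)) * (BOA15.chi A (C r) * BOA15.chi A (C r')) := by
      calc Φ = ∑ A ∈ (Finset.univ : Finset (Fin 11)).powerset, ∑ r : Fin 224, ∑ r' : Fin 224,
            (11 - 2 * (A.card : ℤ)) * (BOA15.chi A (C r) * BOA15.chi A (C r')) :=
          Finset.sum_congr rfl (fun A _ => e0 A)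
        _ = ∑ r : Fin 224, ∑ A ∈ (Finset.univ : Finset (Fin 11)).powerset, ∑ r' : Fin 224,
            (11 - 2 * (A.card : ℤ)) * (BOA15.chi A (C r) * BOA15.chi A (C r')) :=
          Finset.sum_comm
        _ = ∑ r : Fin 224, ∑ r' : Fin 224,
            ∑ A ∈ (Finset.univ : Finset (Fin 11)).powerset,
              (11 - 2 * (A.card : ℤ)) * (BOA15.chi A (C r) * BOA15.chi A (C r')) :=
          Finset.sum_congr rfl (fun r _ => Finset.sum_comm)
    rw [e1]
    refine Finset.sum_nonneg fun r _ => Finset.sum_nonneg fun r' _ => ?_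
    have e2 : ∀ A : Finset (Fin 11), BOA15.chi A (C r) * BOA15.chi A (C r')
        = ∏ i ∈ A, (BOA15.eps (C r i) * BOA15.eps (C r' i)) := by
      intro A
      rw [BOA15.chi, BOA15.chi, ← Finset.prod_mul_distrib]
    rw [Finset.sum_congr rfl (fun A _ => by rw [e2 A])]
    exact BOA15.posW (fun i => BOA15.eps (C r i) * BOA15.eps (C r' i)) (fun i => by
      show BOA15.eps (C r i) * BOA15.eps (C r' i) = 1 ∨ BOA15.eps (C r i) * BOA15.eps (C r' i) = -1
      rcases BOA15.eps_or (C r i) with h | h <;> rcases BOA15.eps_or (C r' i) with h' | h' <;>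
        rw [h, h'] <;> norm_num)
  -- upper bound
  have hu : (Finset.univ : Finset (Fin 11)).card = 11 := by simp
  have hsplit : Φ = ∑ k ∈ Finset.range 12, ∑ A ∈ (Finset.univ : Finset (Fin 11)).powersetCard k,
      (11 - 2 * (A.card : ℤ)) * (BOA15.SF C A) ^ 2 := by
    rw [hΦ, BOA15.split_pow, hu]
  have hcardA : ∀ k : ℕ, ∀ A ∈ (Finset.univ : Finset (Fin 11)).powersetCard k, A.card = k :=
    fun k A hA => (Finset.mem_powersetCard.1 hA).2
  -- k = 0 term
  have b0 : ∑ A ∈ (Finset.univ : Finset (Fin 11)).powersetCard 0,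
      (11 - 2 * (A.card : ℤ)) * (BOA15.SF C A) ^ 2 = 551936 := by
    rw [Finset.powersetCard_zero, Finset.sum_singleton, hemp]
    norm_num
  -- k = 1..5 terms
  have bsmall : ∀ k : ℕ, 1 ≤ k → k ≤ 5 →
      ∑ A ∈ (Finset.univ : Finset (Fin 11)).powersetCard k,
        (11 - 2 * (A.card : ℤ)) * (BOA15.SF C A) ^ 2 = 0 := by
    intro k hk1 hk5
    refine Finset.sum_eq_zero fun A hA => ?_
    have hc := hcardA k A hA
    rw [hsmall A (Finset.card_pos.1 (by omega)) (by omega)]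
    ring
  -- nonpositive terms for k ≥ 6
  have bneg : ∀ k : ℕ, 6 ≤ k →
      ∑ A ∈ (Finset.univ : Finset (Fin 11)).powersetCard k,
        (11 - 2 * (A.card : ℤ)) * (BOA15.SF C A) ^ 2 ≤ 0 := by
    intro k hk
    refine Finset.sum_nonpos fun A hA => ?_
    have hc := hcardA k A hA
    have h1 : (11 - 2 * (A.card : ℤ)) ≤ 0 := by
      rw [hc]
      omega
    exact mul_nonpos_of_nonpos_of_nonneg h1 (sq_nonneg _)
  -- k = 6 term
  have b6 : ∑ A ∈ (Finset.univ : Finset (Fin 11)).powersetCard 6,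
      (11 - 2 * (A.card : ℤ)) * (BOA15.SF C A) ^ 2 ≤ -473088 := by
    have hcard : ((Finset.univ : Finset (Fin 11)).powersetCard 6).card = 462 := by
      rw [Finset.card_powersetCard, hu]
      decide
    calc ∑ A ∈ (Finset.univ : Finset (Fin 11)).powersetCard 6,
          (11 - 2 * (A.card : ℤ)) * (BOA15.SF C A) ^ 2
        ≤ ∑ A ∈ (Finset.univ : Finset (Fin 11)).powersetCard 6, (-1024 : ℤ) := by
          refine Finset.sum_le_sum fun A hA => ?_
          have hc := hcardA 6 A hA
          have hsq := BOA15.odd_sq_ge (BOA15.SF6' hinv hemp hsmall A hc)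
          rw [hc]
          push_cast
          linarith
      _ = -473088 := by rw [Finset.sum_const, hcard]; norm_num
  -- k = 8 term
  have b8 : ∑ A ∈ (Finset.univ : Finset (Fin 11)).powersetCard 8,
      (11 - 2 * (A.card : ℤ)) * (BOA15.SF C A) ^ 2 ≤ -844800 := by
    have hcard : ((Finset.univ : Finset (Fin 11)).powersetCard 8).card = 165 := by
      rw [Finset.card_powersetCard, hu]
      decide
    calc ∑ A ∈ (Finset.univ : Finset (Fin 11)).powersetCard 8,
          (11 - 2 * (A.card : ℤ)) * (BOA15.SF C A) ^ 2
        ≤ ∑ A ∈ (Finset.univ : Finset (Fin 11)).powersetCard 8, (-5120 : ℤ) := by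
          refine Finset.sum_le_sum fun A hA => ?_
          have hc := hcardA 8 A hA
          have hsq := BOA15.odd_sq_ge (BOA15.SF8 hinv hemp hsmall A hc)
          rw [hc]
          push_cast
          linarith
      _ = -844800 := by rw [Finset.sum_const, hcard]; norm_num
  -- combine
  have hup : Φ ≤ -765952 := by
    rw [hsplit]
    simp only [Finset.sum_range_succ, Finset.sum_range_zero]
    have h1 := bsmall 1 (by norm_num) (by norm_num)
    have h2 := bsmall 2 (by norm_num) (by norm_num)
    have h3 := bsmall 3 (by norm_num) (by norm_num)
    have h4 := bsmall 4 (by norm_num) (by norm_num)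
    have h5 := bsmall 5 (by norm_num) (by norm_num)
    have h7 := bneg 7 (by norm_num)
    have h9 := bneg 9 (by norm_num)
    have h10 := bneg 10 (by norm_num)
    have h11 := bneg 11 (by norm_num)
    linarith [b0, b6, b8]
  linarith [hpos, hup]
end

section
/- (Seiden–Zemach coexistence) Let k ≥ 1 and n ≥ 2k. A binary orthogonal array of parameters (n, N, 2k) exists if and only if a binary orthogonal array of parameters (n+1, 2N, 2k+1) exists. -/
namespace SZ

open Finset

variable {n M : ℕ}

lemma zmod2_ne_iff (a b : ZMod 2) : a ≠ b ↔ a = b + 1 := by revert a b; decide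

lemma zmod2_add_one_eq_iff (a b : ZMod 2) : a + 1 = b ↔ a = b + 1 := by revert a b; decide

lemma zmod2_aa (a : ZMod 2) : a + 1 + 1 = a := by revert a; decide

/-- Count of rows agreeing with `v` on `S`. -/
def cnt (C : Fin M → Fin n → ZMod 2) (S : Finset (Fin n)) (v : Fin n → ZMod 2) : ℕ :=
  (Finset.univ.filter (fun r => ∀ j ∈ S, C r j = v j)).card

lemma cnt_congr (C : Fin M → Fin n → ZMod 2) (S : Finset (Fin n)) {v w : Fin n → ZMod 2}
    (h : ∀ j ∈ S, v j = w j) : cnt C S v = cnt C S w := by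
  unfold cnt
  congr 1
  apply Finset.filter_congr
  intro r _
  constructor
  · intro hr j hj; rw [hr j hj, h j hj]
  · intro hr j hj; rw [hr j hj, h j hj]

lemma cnt_partition (C : Fin M → Fin n → ZMod 2) (S T : Finset (Fin n)) (hd : Disjoint S T)
    (v : Fin n → ZMod 2) :
    cnt C S v = ∑ w : (↥T → ZMod 2),
      cnt C (S ∪ T) (fun j => if h : j ∈ T then w ⟨j, h⟩ else v j) := by
  classical
  unfold cnt
  rw [Finset.card_eq_sum_card_fiberwise
    (f := fun r => (fun j : ↥T => C r j)) (t := Finset.univ) (fun x _ => Finset.mem_univ _)]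
  apply Finset.sum_congr rfl
  intro w _
  congr 1
  rw [Finset.filter_filter]
  apply Finset.filter_congr
  intro r _
  constructor
  · rintro ⟨h1, h2⟩ j hj
    rcases Finset.mem_union.1 hj with hjS | hjT
    · have hjT : j ∉ T := fun hT => (Finset.disjoint_left.1 hd hjS) hT
      simp only [dif_neg hjT]
      exact h1 j hjS
    · simp only [dif_pos hjT]
      exact congrFun h2 ⟨j, hjT⟩
  · intro h
    constructor
    · intro j hj
      have hjT : j ∉ T := fun hT => (Finset.disjoint_left.1 hd hj) hT
      have := h j (Finset.mem_union_left _ hj)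
      simpa only [dif_neg hjT] using this
    · funext j
      have := h j (Finset.mem_union_right _ j.2)
      simpa only [dif_pos j.2] using this

lemma boa_div {τ : ℕ} {C : Fin M → Fin n → ZMod 2} (h : IsBOA n M τ C) (hτ : τ ≤ n) :
    2 ^ τ * (M / 2 ^ τ) = M := by
  classical
  obtain ⟨S, -, hS⟩ := Finset.exists_subset_card_eq (s := (Finset.univ : Finset (Fin n))) (n := τ)
    (by simpa using hτ)
  have h0 : cnt C ∅ (0 : Fin n → ZMod 2) = M := by
    unfold cnt; simp
  rw [cnt_partition C ∅ S (by simp) 0] at h0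
  have : ∀ w : (↥S → ZMod 2), cnt C (∅ ∪ S)
      (fun j => if h' : j ∈ S then w ⟨j, h'⟩ else (0 : Fin n → ZMod 2) j) = M / 2 ^ τ := by
    intro w
    exact h _ (by simpa using hS) _
  rw [Finset.sum_congr rfl (fun w _ => this w)] at h0
  rw [Finset.sum_const, Finset.card_univ] at h0
  have hcard : Fintype.card (↥S → ZMod 2) = 2 ^ τ := by
    rw [Fintype.card_fun]
    simp [hS]
  rw [hcard, smul_eq_mul] at h0
  exact h0

lemma boa_mono {τ s : ℕ} {C : Fin M → Fin n → ZMod 2} (h : IsBOA n M τ C)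
    (hs : s ≤ τ) (hτ : τ ≤ n) : IsBOA n M s C := by
  classical
  intro S hS v
  obtain ⟨S', hSS', -, hS'⟩ := Finset.exists_subsuperset_card_eq
    (Finset.subset_univ S) (n := τ) (by omega) (by simpa using hτ)
  have hdisj : Disjoint S (S' \ S) := Finset.disjoint_sdiff
  have hcount : cnt C S v = ∑ w : (↥(S' \ S) → ZMod 2), M / 2 ^ τ := by
    rw [cnt_partition C S (S' \ S) hdisj v]
    apply Finset.sum_congr rfl
    intro w _
    apply h
    rw [Finset.union_sdiff_of_subset hSS', hS']
  rw [Finset.sum_const, Finset.card_univ, smul_eq_mul, Fintype.card_fun] at hcount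
  have hc2 : Fintype.card (ZMod 2) = 2 := by decide
  have hcc : Fintype.card ↥(S' \ S) = τ - s := by
    rw [Fintype.card_coe, Finset.card_sdiff_of_subset hSS', hS', hS]
  rw [hc2, hcc] at hcount
  have hdiv := boa_div h hτ
  have : M / 2 ^ s = 2 ^ (τ - s) * (M / 2 ^ τ) := by
    have h1 : 2 ^ τ = 2 ^ s * 2 ^ (τ - s) := by
      rw [← pow_add]
      congr 1
      omega
    calc M / 2 ^ s = (2 ^ τ * (M / 2 ^ τ)) / 2 ^ s := by rw [hdiv]
    _ = (2 ^ s * (2 ^ (τ - s) * (M / 2 ^ τ))) / 2 ^ s := by rw [h1, mul_assoc]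
    _ = 2 ^ (τ - s) * (M / 2 ^ τ) := by
        rw [Nat.mul_div_cancel_left _ (by positivity)]
  rw [this]
  show cnt C S v = _
  rw [hcount]

def flip2 (T : Finset (Fin n)) (v : Fin n → ZMod 2) : Fin n → ZMod 2 :=
  fun j => if j ∈ T then v j + 1 else v j

lemma flip2_comm (T T' : Finset (Fin n)) (v : Fin n → ZMod 2) :
    flip2 T (flip2 T' v) = flip2 T' (flip2 T v) := by
  funext j
  by_cases h1 : j ∈ T <;> by_cases h2 : j ∈ T' <;> simp [flip2, h1, h2]

lemma flip2_insert (j : Fin n) (T : Finset (Fin n)) (hj : j ∉ T) (v : Fin n → ZMod 2) :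
    flip2 (insert j T) v = flip2 {j} (flip2 T v) := by
  funext i
  by_cases h1 : i = j
  · subst h1
    simp [flip2, hj]
  · by_cases h2 : i ∈ T <;> simp [flip2, h1, h2]

lemma flip2_flip2_self (T : Finset (Fin n)) (v : Fin n → ZMod 2) :
    flip2 T (flip2 T v) = v := by
  funext j
  by_cases h1 : j ∈ T <;> simp [flip2, h1, zmod2_aa]

lemma flip_single (C : Fin M → Fin n → ZMod 2) (S : Finset (Fin n)) {j : Fin n} (hj : j ∈ S)
    (v : Fin n → ZMod 2) :
    cnt C S v + cnt C S (flip2 {j} v) = cnt C (S.erase j) v := by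
  classical
  have h1 : Finset.univ.filter (fun r : Fin M => ∀ i ∈ S, C r i = v i)
      = (Finset.univ.filter (fun r => ∀ i ∈ S.erase j, C r i = v i)).filter
        (fun r => C r j = v j) := by
    rw [Finset.filter_filter]
    apply Finset.filter_congr
    intro r _
    constructor
    · intro h
      exact ⟨fun i hi => h i (Finset.mem_of_mem_erase hi), h j hj⟩
    · rintro ⟨h1, h2⟩ i hi
      by_cases hij : i = j
      · subst hij; exact h2
      · exact h1 i (Finset.mem_erase.2 ⟨hij, hi⟩)
  have h2 : Finset.univ.filter (fun r : Fin M => ∀ i ∈ S, C r i = flip2 {j} v i)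
      = (Finset.univ.filter (fun r => ∀ i ∈ S.erase j, C r i = v i)).filter
        (fun r => ¬ (C r j = v j)) := by
    rw [Finset.filter_filter]
    apply Finset.filter_congr
    intro r _
    constructor
    · intro h
      constructor
      · intro i hi
        have hij : i ≠ j := Finset.ne_of_mem_erase hi
        have := h i (Finset.mem_of_mem_erase hi)
        rwa [flip2, if_neg (by simp [hij])] at this
      · have := h j hj
        rw [flip2, if_pos (by simp)] at this
        exact (zmod2_ne_iff _ _).2 this
    · rintro ⟨h1, h2⟩ i hi
      by_cases hij : i = j
      · subst hij
        rw [flip2, if_pos (by simp)]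
        exact (zmod2_ne_iff _ _).1 h2
      · rw [flip2, if_neg (by simp [hij])]
        exact h1 i (Finset.mem_erase.2 ⟨hij, hi⟩)
  unfold cnt
  rw [h1, h2]
  exact Finset.card_filter_add_card_filter_not _

def gsum (C : Fin M → Fin n → ZMod 2) (S : Finset (Fin n)) (v : Fin n → ZMod 2) : ℕ :=
  cnt C S v + cnt C S (flip2 S v)

lemma gsum_step {k : ℕ} {C : Fin M → Fin n → ZMod 2} (h : IsBOA n M (2*k) C)
    {S : Finset (Fin n)} (hS : S.card = 2*k+1) {j : Fin n} (hj : j ∈ S) (v : Fin n → ZMod 2) :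
    gsum C S v + gsum C S (flip2 {j} v) = 2 * (M / 2 ^ (2*k)) := by
  have hec : (S.erase j).card = 2*k := by
    rw [Finset.card_erase_of_mem hj, hS]
    omega
  have a1 : cnt C S v + cnt C S (flip2 {j} v) = M / 2 ^ (2*k) := by
    rw [flip_single C S hj v]
    exact h _ hec _
  have a2 : cnt C S (flip2 S v) + cnt C S (flip2 {j} (flip2 S v)) = M / 2 ^ (2*k) := by
    rw [flip_single C S hj (flip2 S v)]
    exact h _ hec _
  have a3 : cnt C S (flip2 S (flip2 {j} v)) = cnt C S (flip2 {j} (flip2 S v)) := by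
    rw [flip2_comm]
  unfold gsum
  rw [a3]
  omega

lemma gsum_flip {k : ℕ} {C : Fin M → Fin n → ZMod 2} (h : IsBOA n M (2*k) C)
    {S : Finset (Fin n)} (hS : S.card = 2*k+1) (T : Finset (Fin n)) (hT : T ⊆ S) :
    ∀ v, (Even T.card → gsum C S (flip2 T v) = gsum C S v) ∧
      (¬ Even T.card → gsum C S (flip2 T v) + gsum C S v = 2 * (M / 2 ^ (2*k))) := by
  classical
  induction T using Finset.induction_on with
  | empty =>
    intro v
    have : flip2 (∅ : Finset (Fin n)) v = v := by funext j; simp [flip2]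
    simp [this]
  | @insert j T hjT ih =>
    intro v
    have hjS : j ∈ S := hT (Finset.mem_insert_self j T)
    have hTS : T ⊆ S := fun x hx => hT (Finset.mem_insert_of_mem hx)
    have hins : flip2 (insert j T) v = flip2 {j} (flip2 T v) := flip2_insert j T hjT v
    have step := gsum_step h hS hjS (flip2 T v)
    have ihv := ih hTS v
    have hcard : (insert j T).card = T.card + 1 := Finset.card_insert_of_notMem hjT
    constructor
    · intro hev
      rw [hcard, Nat.even_add_one] at hev
      have := ihv.2 hev
      rw [hins]
      omega
    · intro hod
      rw [hcard, Nat.even_add_one, not_not] at hod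
      have := ihv.1 hod
      rw [hins]
      omega

lemma key_lemma {k : ℕ} {C : Fin M → Fin n → ZMod 2} (h : IsBOA n M (2*k) C)
    {S : Finset (Fin n)} (hS : S.card = 2*k+1) (v w : Fin n → ZMod 2)
    (hvw : ∀ j ∈ S, w j = v j + 1) :
    cnt C S v + cnt C S w = M / 2 ^ (2*k) := by
  have hodd : ¬ Even S.card := by rw [hS, Nat.even_iff]; omega
  have h1 := (gsum_flip h hS S Finset.Subset.rfl v).2 hodd
  have h2 : gsum C S (flip2 S v) = gsum C S v := by
    unfold gsum
    rw [flip2_flip2_self]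
    omega
  have h3 : cnt C S w = cnt C S (flip2 S v) := by
    apply cnt_congr
    intro j hj
    rw [hvw j hj, flip2, if_pos hj]
  unfold gsum at h1 h2
  omega

lemma card_filter_equiv {α β : Type*} [Fintype α] [Fintype β]
    (e : α ≃ β) (Q : β → Prop) [DecidablePred Q] :
    (Finset.univ.filter (fun a => Q (e a))).card = (Finset.univ.filter Q).card := by
  classical
  apply Finset.card_bij (fun a _ => e a)
  · intro a ha
    simp only [Finset.mem_filter, Finset.mem_univ, true_and] at ha ⊢
    exact ha
  · intro a _ b _ hab
    exact e.injective hab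
  · intro b hb
    refine ⟨e.symm b, ?_, by simp⟩
    simp only [Finset.mem_filter, Finset.mem_univ, true_and, Equiv.apply_symm_apply] at hb ⊢
    exact hb

lemma card_filter_sum {α β : Type*} [Fintype α] [Fintype β]
    (Q : α ⊕ β → Prop) [DecidablePred Q] :
    (Finset.univ.filter Q).card
      = (Finset.univ.filter (fun a => Q (Sum.inl a))).card
        + (Finset.univ.filter (fun b => Q (Sum.inr b))).card := by
  classical
  simp only [Finset.card_filter]
  exact Fintype.sum_sum_type _

lemma card_filter_subtype {α : Type*} [Fintype α] (s : Finset α)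
    (P : α → Prop) [DecidablePred P] :
    (Finset.univ.filter (fun x : {x // x ∈ s} => P ↑x)).card = (s.filter P).card := by
  classical
  refine Finset.card_bij (fun x _ => (x : α)) ?_ ?_ ?_
  · intro x hx
    simp only [Finset.mem_filter, Finset.mem_univ, true_and] at hx
    exact Finset.mem_filter.2 ⟨x.2, hx⟩
  · intro a _ b _ hab
    exact Subtype.ext hab
  · intro b hb
    obtain ⟨hb1, hb2⟩ := Finset.mem_filter.1 hb
    exact ⟨⟨b, hb1⟩, by simp [hb2], rfl⟩

def pre (S : Finset (Fin (n+1))) : Finset (Fin n) :=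
  Finset.univ.filter (fun i => i.castSucc ∈ S)

lemma pre_card (S : Finset (Fin (n+1))) : (pre S).card = (S.erase (Fin.last n)).card := by
  apply Finset.card_bij (fun i _ => i.castSucc)
  · intro i hi
    simp only [pre, Finset.mem_filter, Finset.mem_univ, true_and] at hi
    exact Finset.mem_erase.2 ⟨(Fin.castSucc_lt_last i).ne, hi⟩
  · intro a _ b _ hab
    exact Fin.castSucc_injective _ hab
  · intro j hj
    obtain ⟨hne, hjS⟩ := Finset.mem_erase.1 hj
    refine ⟨j.castPred hne, ?_, Fin.castSucc_castPred j hne⟩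
    simp only [pre, Finset.mem_filter, Finset.mem_univ, true_and, Fin.castSucc_castPred]
    exact hjS

lemma snoc_cond (S : Finset (Fin (n+1))) (f : Fin n → ZMod 2) (x : ZMod 2)
    (v : Fin (n+1) → ZMod 2) (hx : Fin.last n ∈ S → x = v (Fin.last n)) :
    (∀ j ∈ S, (Fin.snoc f x : Fin (n+1) → ZMod 2) j = v j) ↔
      (∀ i ∈ pre S, f i = v i.castSucc) := by
  constructor
  · intro h i hi
    have := h i.castSucc ((Finset.mem_filter.1 hi).2)
    rwa [Fin.snoc_castSucc] at this
  · intro h j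
    refine Fin.lastCases ?_ ?_ j
    · intro hj
      rw [Fin.snoc_last]
      exact hx hj
    · intro i hi
      rw [Fin.snoc_castSucc]
      exact h i (Finset.mem_filter.2 ⟨Finset.mem_univ _, hi⟩)

lemma two_div : ∀ (N k : ℕ), 2*N / 2^(2*k+1) = N / 2^(2*k) := by
  intro N k
  rw [pow_succ, mul_comm ((2:ℕ)^(2*k)) 2]
  exact Nat.mul_div_mul_left _ _ (by norm_num)

theorem sz_forward {k n N : ℕ} (C : Fin N → Fin n → ZMod 2) (hC : IsBOA n N (2*k) C) :
    ∃ D : Fin (2*N) → Fin (n+1) → ZMod 2, IsBOA (n+1) (2*N) (2*k+1) D := by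
  set E : (Fin N ⊕ Fin N) → Fin (n+1) → ZMod 2 :=
    Sum.elim (fun r => Fin.snoc (C r) 0) (fun r => Fin.snoc (fun i => C r i + 1) 1) with hE
  set e : Fin (2*N) ≃ (Fin N ⊕ Fin N) :=
    (finCongr (two_mul N)).trans finSumFinEquiv.symm with he
  refine ⟨fun r => E (e r), ?_⟩
  intro S hS v
  -- the two block counts
  have hA0 : (Fin.last n ∈ S → (0 : ZMod 2) = v (Fin.last n)) →
      (Finset.univ.filter (fun r : Fin N =>
        ∀ j ∈ S, (Fin.snoc (C r) 0 : Fin (n+1) → ZMod 2) j = v j)).card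
      = cnt C (pre S) (fun i => v i.castSucc) := by
    intro hx
    unfold cnt
    congr 1
    apply Finset.filter_congr
    intro r _
    exact snoc_cond S (C r) 0 v hx
  have hB0 : (Fin.last n ∈ S → (1 : ZMod 2) = v (Fin.last n)) →
      (Finset.univ.filter (fun r : Fin N =>
        ∀ j ∈ S, (Fin.snoc (fun i => C r i + 1) 1 : Fin (n+1) → ZMod 2) j = v j)).card
      = cnt C (pre S) (fun i => v i.castSucc + 1) := by
    intro hx
    unfold cnt
    congr 1
    apply Finset.filter_congr
    intro r _
    refine (snoc_cond S (fun i => C r i + 1) 1 v hx).trans ?_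
    refine forall₂_congr fun i hi => ?_
    rw [zmod2_add_one_eq_iff]
  have hcalc : (Finset.univ.filter (fun r : Fin (2*N) => ∀ j ∈ S, E (e r) j = v j)).card
      = (Finset.univ.filter (fun r : Fin N =>
          ∀ j ∈ S, (Fin.snoc (C r) 0 : Fin (n+1) → ZMod 2) j = v j)).card
        + (Finset.univ.filter (fun r : Fin N =>
          ∀ j ∈ S, (Fin.snoc (fun i => C r i + 1) 1 : Fin (n+1) → ZMod 2) j = v j)).card := by
    calc (Finset.univ.filter (fun r : Fin (2*N) => ∀ j ∈ S, E (e r) j = v j)).card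
        = (Finset.univ.filter (fun x : Fin N ⊕ Fin N => ∀ j ∈ S, E x j = v j)).card :=
          card_filter_equiv e (fun x : Fin N ⊕ Fin N => ∀ j ∈ S, E x j = v j)
      _ = _ := card_filter_sum _
  show (Finset.univ.filter (fun r : Fin (2*N) => ∀ j ∈ S, E (e r) j = v j)).card
      = 2*N / 2^(2*k+1)
  rw [hcalc, two_div]
  by_cases hlast : Fin.last n ∈ S
  · have hpc : (pre S).card = 2*k := by
      rw [pre_card, Finset.card_erase_of_mem hlast, hS]
      omega
    have hzero : ∀ (g : Fin N → Fin (n+1) → ZMod 2),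
        (∀ r, g r (Fin.last n) ≠ v (Fin.last n)) →
        (Finset.univ.filter (fun r : Fin N => ∀ j ∈ S, g r j = v j)).card = 0 := by
      intro g hg
      rw [Finset.card_eq_zero, Finset.filter_eq_empty_iff]
      intro r _ hcon
      exact hg r (hcon _ hlast)
    by_cases hv : v (Fin.last n) = 0
    · have hA : (Finset.univ.filter (fun r : Fin N =>
          ∀ j ∈ S, (Fin.snoc (C r) 0 : Fin (n+1) → ZMod 2) j = v j)).card = N / 2^(2*k) := by
        rw [hA0 (fun _ => hv.symm)]
        exact hC _ hpc _
      have hB : (Finset.univ.filter (fun r : Fin N =>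
          ∀ j ∈ S, (Fin.snoc (fun i => C r i + 1) 1 : Fin (n+1) → ZMod 2) j = v j)).card = 0 := by
        apply hzero
        intro r
        rw [Fin.snoc_last, hv]
        decide
      rw [hA, hB]
      simp
    · have hv1 : v (Fin.last n) = 1 := by
        have := (zmod2_ne_iff (v (Fin.last n)) 0).1 hv
        simpa using this
      have hA : (Finset.univ.filter (fun r : Fin N =>
          ∀ j ∈ S, (Fin.snoc (C r) 0 : Fin (n+1) → ZMod 2) j = v j)).card = 0 := by
        apply hzero
        intro r
        rw [Fin.snoc_last, hv1]
        decide
      have hB : (Finset.univ.filter (fun r : Fin N =>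
          ∀ j ∈ S, (Fin.snoc (fun i => C r i + 1) 1 : Fin (n+1) → ZMod 2) j = v j)).card
          = N / 2^(2*k) := by
        rw [hB0 (fun _ => hv1.symm)]
        exact hC _ hpc _
      rw [hA, hB]
      simp
  · have hpc : (pre S).card = 2*k+1 := by
      rw [pre_card, Finset.erase_eq_of_notMem hlast, hS]
    rw [hA0 (fun h => absurd h hlast), hB0 (fun h => absurd h hlast)]
    exact key_lemma hC hpc _ _ (fun j _ => rfl)

theorem sz_backward {k n N : ℕ} (hn : 2*k ≤ n)
    (D : Fin (2*N) → Fin (n+1) → ZMod 2) (hD : IsBOA (n+1) (2*N) (2*k+1) D) :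
    ∃ C : Fin N → Fin n → ZMod 2, IsBOA n N (2*k) C := by
  have h1 : IsBOA (n+1) (2*N) 1 D := boa_mono hD (by omega) (by omega)
  have hFcard : (Finset.univ.filter (fun r : Fin (2*N) => D r (Fin.last n) = 0)).card = N := by
    have happ := h1 {Fin.last n} (Finset.card_singleton _) (fun _ => 0)
    have heq : Finset.univ.filter
        (fun r : Fin (2*N) => ∀ j ∈ ({Fin.last n} : Finset (Fin (n+1))), D r j = 0)
        = Finset.univ.filter (fun r : Fin (2*N) => D r (Fin.last n) = 0) := by
      apply Finset.filter_congr
      intro r _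
      simp
    rw [heq] at happ
    rw [happ, pow_one]
    omega
  set F : Finset (Fin (2*N)) := Finset.univ.filter (fun r => D r (Fin.last n) = 0) with hF
  set e : Fin N ≃ ↥F := (finCongr hFcard.symm).trans F.equivFin.symm with he
  refine ⟨fun r i => D ((e r : ↥F) : Fin (2*N)) i.castSucc, ?_⟩
  intro S hS v
  set emb : Fin n ↪ Fin (n+1) := ⟨Fin.castSucc, Fin.castSucc_injective n⟩ with hemb
  set S₁ : Finset (Fin (n+1)) := insert (Fin.last n) (S.map emb) with hS₁
  have hlastnotmem : Fin.last n ∉ S.map emb := by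
    rw [Finset.mem_map]
    rintro ⟨i, -, hi⟩
    exact (Fin.castSucc_lt_last i).ne hi
  have hS₁card : S₁.card = 2*k+1 := by
    rw [hS₁, Finset.card_insert_of_notMem hlastnotmem, Finset.card_map, hS]
  have happ := hD S₁ hS₁card (Fin.snoc v 0)
  have hcalc : (Finset.univ.filter (fun r : Fin N =>
      ∀ i ∈ S, D ((e r : ↥F) : Fin (2*N)) i.castSucc = v i)).card
      = (Finset.univ.filter (fun x : Fin (2*N) =>
          ∀ j ∈ S₁, D x j = (Fin.snoc v 0 : Fin (n+1) → ZMod 2) j)).card := by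
    calc (Finset.univ.filter (fun r : Fin N =>
        ∀ i ∈ S, D ((e r : ↥F) : Fin (2*N)) i.castSucc = v i)).card
        = (Finset.univ.filter (fun x : ↥F =>
            ∀ i ∈ S, D (x : Fin (2*N)) i.castSucc = v i)).card :=
          card_filter_equiv e (fun x : ↥F => ∀ i ∈ S, D (x : Fin (2*N)) i.castSucc = v i)
      _ = (F.filter (fun x : Fin (2*N) => ∀ i ∈ S, D x i.castSucc = v i)).card :=
          card_filter_subtype F (fun x : Fin (2*N) => ∀ i ∈ S, D x i.castSucc = v i)
      _ = (Finset.univ.filter (fun x : Fin (2*N) =>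
          ∀ j ∈ S₁, D x j = (Fin.snoc v 0 : Fin (n+1) → ZMod 2) j)).card := by
          rw [hF, Finset.filter_filter]
          congr 1
          apply Finset.filter_congr
          intro r _
          rw [hS₁, Finset.forall_mem_insert]
          constructor
          · rintro ⟨h0, hrest⟩
            refine ⟨by rw [Fin.snoc_last]; exact h0, ?_⟩
            intro j hj
            rw [Finset.mem_map] at hj
            obtain ⟨i, hiS, rfl⟩ := hj
            rw [hemb]
            show D r i.castSucc = (Fin.snoc v 0 : Fin (n+1) → ZMod 2) i.castSucc
            rw [Fin.snoc_castSucc]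
            exact hrest i hiS
          · rintro ⟨h0, hrest⟩
            refine ⟨by rw [Fin.snoc_last] at h0; exact h0, ?_⟩
            intro i hiS
            have := hrest (emb i) (Finset.mem_map_of_mem emb hiS)
            rw [hemb] at this
            have : D r i.castSucc = (Fin.snoc v 0 : Fin (n+1) → ZMod 2) i.castSucc := this
            rwa [Fin.snoc_castSucc] at this
  show (Finset.univ.filter (fun r : Fin N =>
      ∀ i ∈ S, D ((e r : ↥F) : Fin (2*N)) i.castSucc = v i)).card = N / 2^(2*k)
  rw [hcalc, happ, two_div]

end SZ

theorem stmt_18 (k n N : ℕ) (hk : 1 ≤ k) (hn : 2 * k ≤ n) :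
    (∃ C : Fin N → (Fin n → ZMod 2), IsBOA n N (2 * k) C) ↔
    (∃ C : Fin (2 * N) → (Fin (n + 1) → ZMod 2), IsBOA (n + 1) (2 * N) (2 * k + 1) C) := by
  constructor
  · rintro ⟨C, hC⟩
    exact SZ.sz_forward C hC
  · rintro ⟨D, hD⟩
    exact SZ.sz_backward hn D hD
end
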